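/- arXiv:2206.02190 — 6 statements merged into one kernel-verified Lean document; each statement's English description precedes it below -/
import Mathlib

section
/- Let n ≥ 1 be an integer and let c > 0 and r ≥ 1 be real numbers. There exists a constant C = C(n, c, r) such that for every real k ≥ 1 and every n×n real symmetric positive definite matrix Y with Y_D/r ≤ Y in the Loewner order, one has #{T ∈ Λ_n : tr(TY) ≤ c·k} ≤ C · k^{n(n+1)/2} · det(Y)^{−(n+1)/2}. -/
/-
Every `T` in the set is positive definite with integral diagonal, so `1 ≤ T i i`. Since
`Y - r⁻¹ Y_D` is positive semidefinite, `tr (T Y_D) ≤ r tr (T Y) ≤ r c k`, whence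
`T i i ≤ r c k / Y i i`, and positive semidefiniteness of `T` gives
`|T i j| ≤ √(T i i T j j)`.
So `T` is determined by the `n(n+1)/2` integers `2 T i j`, `i ≤ j`, each confined to an interval
of length `O(r c k / √(Y i i Y j j))`. The product of these lengths is
`O((r c k)^(n(n+1)/2) (∏ i, Y i i)^(-(n+1)/2))`, and Hadamard's inequality
`det Y ≤ ∏ i, Y i i` turns this into the claimed bound.
-/

open scoped Real

/-- `Λ_n`: real symmetric positive definite `n × n` matrices with integral diagonal
entries such that `2T` has integer entries (half-integral matrices). -/
def IsHalfIntegral {n : ℕ} (T : Matrix (Fin n) (Fin n) ℝ) : Prop :=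
  T.PosDef ∧ (∀ i, ∃ z : ℤ, T i i = z) ∧ (∀ i j, ∃ z : ℤ, 2 * T i j = z)

/-- The Loewner order: `A ≤ B` iff `B - A` is positive semidefinite. -/
def LoewnerLE {n : ℕ} (A B : Matrix (Fin n) (Fin n) ℝ) : Prop := (B - A).PosSemidef

/-- The diagonal part `Y_D` of a matrix `Y`. -/
def diagPart {n : ℕ} (Y : Matrix (Fin n) (Fin n) ℝ) : Matrix (Fin n) (Fin n) ℝ :=
  Matrix.diagonal fun i => Y i i

open Finset

namespace Matrix

variable {ι : Type*}

lemma PosSemidef.sq_apply_le_mul {A : Matrix ι ι ℝ} (hA : A.PosSemidef) (i j : ι) :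
    A i j ^ 2 ≤ A i i * A j j := by
  have hdet := (hA.submatrix ![i, j]).det_nonneg
  have hsymm : A j i = A i j := by simpa using congrFun (congrFun hA.isHermitian i) j
  simp only [det_fin_two, submatrix_apply, cons_val_zero, cons_val_one, hsymm] at hdet
  linarith

lemma PosSemidef.abs_apply_le_sqrt_mul_sqrt {A : Matrix ι ι ℝ} (hA : A.PosSemidef) (i j : ι) :
    |A i j| ≤ √(A i i) * √(A j j) := by
  rw [← Real.sqrt_mul hA.diag_nonneg]
  exact Real.abs_le_sqrt (hA.sq_apply_le_mul i j)

open scoped MatrixOrder in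
lemma PosSemidef.trace_mul_nonneg [Fintype ι] [DecidableEq ι] {A B : Matrix ι ι ℝ}
    (hA : A.PosSemidef) (hB : B.PosSemidef) : 0 ≤ (A * B).trace := by
  set S := CFC.sqrt A
  have hS : Sᴴ = S := (nonneg_iff_posSemidef.mp (CFC.sqrt_nonneg A)).isHermitian
  have hAS : A = Sᴴ * S := by rw [hS, CFC.sqrt_mul_sqrt_self A hA.nonneg]
  rw [hAS, mul_assoc, trace_mul_comm]
  exact (hB.mul_mul_conjTranspose_same S).trace_nonneg

lemma PosSemidef.det_le_exp_trace_sub_card [Fintype ι] [DecidableEq ι] {A : Matrix ι ι ℝ}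
    (hA : A.PosSemidef) : A.det ≤ Real.exp (A.trace - Fintype.card ι) := by
  set μ := hA.isHermitian.eigenvalues
  have hdet : A.det = ∏ i, μ i := by simpa using hA.isHermitian.det_eq_prod_eigenvalues
  have htr : A.trace = ∑ i, μ i := by simpa using hA.isHermitian.trace_eq_sum_eigenvalues
  calc A.det = ∏ i, μ i := hdet
    _ ≤ ∏ i, Real.exp (μ i - 1) := prod_le_prod (fun i _ => hA.eigenvalues_nonneg i)
        fun i _ => by linarith [Real.add_one_le_exp (μ i - 1)]
    _ = Real.exp (A.trace - Fintype.card ι) := by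
        rw [← Real.exp_sum, sum_sub_distrib, htr]; simp

lemma PosDef.det_le_prod_diag [Fintype ι] [DecidableEq ι] {Y : Matrix ι ι ℝ} (hY : Y.PosDef) :
    Y.det ≤ ∏ i, Y i i := by
  have hYd : ∀ i, 0 < Y i i := fun i => hY.diag_pos
  set d : ι → ℝ := fun i => (√(Y i i))⁻¹
  have hd2 : ∀ i, d i * d i = (Y i i)⁻¹ := fun i => by
    simp only [d, ← mul_inv, Real.mul_self_sqrt (hYd i).le]
  have hZ := hY.posSemidef.conjTranspose_mul_mul_same (diagonal d)
  have hZtr : ((diagonal d)ᴴ * Y * diagonal d).trace = Fintype.card ι := by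
    have : ∀ i, d i * Y i i * d i = 1 := fun i => by
      rw [mul_right_comm, hd2, inv_mul_cancel₀ (hYd i).ne']
    simp [trace, diagonal_mul, mul_diagonal, this]
  have hZdet : ((diagonal d)ᴴ * Y * diagonal d).det = (∏ i, Y i i)⁻¹ * Y.det := by
    simp [det_mul, det_diagonal, ← prod_inv_distrib, ← hd2, prod_mul_distrib]; ring
  have hP : 0 < ∏ i, Y i i := prod_pos fun i _ => hYd i
  have := hZ.det_le_exp_trace_sub_card
  rwa [hZtr, hZdet, sub_self, Real.exp_zero, inv_mul_le_iff₀ hP, mul_one] at this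

end Matrix

section UpperTriangle

variable {ι : Type*}

def halfIntegralBox (M : ι → ι → ℝ) : Set (Matrix ι ι ℝ) :=
  {T | T.IsSymm ∧ ∀ i j, (∃ z : ℤ, 2 * T i j = z) ∧ |T i j| ≤ M i j}

lemma cast_floor_two_mul_of_mem_halfIntegralBox {M : ι → ι → ℝ} {T : Matrix ι ι ℝ}
    (hT : T ∈ halfIntegralBox M) (i j : ι) : (⌊2 * T i j⌋ : ℝ) = 2 * T i j := by
  obtain ⟨z, hz⟩ := (hT.2 i j).1
  rw [hz, Int.floor_intCast]

variable [LinearOrder ι]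

lemma injOn_floor_halfIntegralBox (M : ι → ι → ℝ) :
    Set.InjOn (fun T (p : {p : ι × ι // p.1 ≤ p.2}) => ⌊2 * T p.1.1 p.1.2⌋)
      (halfIntegralBox M) := by
  intro T hT T' hT' h
  have hupper : ∀ i j, i ≤ j → T i j = T' i j := fun i j hij => by
    have := congrArg (fun z : ℤ => (z : ℝ)) (congrFun h ⟨(i, j), hij⟩)
    simp only [cast_floor_two_mul_of_mem_halfIntegralBox hT,
      cast_floor_two_mul_of_mem_halfIntegralBox hT'] at this
    linarith
  ext i j
  rcases le_total i j with hij | hji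
  · exact hupper i j hij
  · rw [← hT.1.apply, ← hT'.1.apply]
    exact hupper j i hji

variable [Fintype ι]

lemma card_filter_le_add_card_filter_ge (i : ι) :
    #{j | i ≤ j} + #{j | j ≤ i} = Fintype.card ι + 1 := by
  rw [← card_union_add_card_inter, ← filter_or, ← filter_and]
  have hu : ({j | i ≤ j ∨ j ≤ i} : Finset ι) = univ :=
    filter_true_of_mem fun j _ => le_total i j
  have hi : ({j | i ≤ j ∧ j ≤ i} : Finset ι) = {i} := by
    ext j; simp [le_antisymm_iff, and_comm]
  rw [hu, hi, card_univ, card_singleton]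

lemma prod_subtype_fst_le_snd_mul {M : Type*} [CommMonoid M] (f : ι → M) :
    ∏ p : {p : ι × ι // p.1 ≤ p.2}, f p.1.1 * f p.1.2 =
      (∏ i, f i) ^ (Fintype.card ι + 1) := by
  rw [← prod_subtype {p : ι × ι | p.1 ≤ p.2} (by simp) (fun p => f p.1 * f p.2),
    prod_mul_distrib, prod_filter, prod_filter, Fintype.prod_prod_type,
    Fintype.prod_prod_type_right]
  simp_rw [← prod_filter, prod_const, ← prod_mul_distrib, ← pow_add,
    card_filter_le_add_card_filter_ge, prod_pow]

lemma card_subtype_fst_le_snd : (Fintype.card {p : ι × ι // p.1 ≤ p.2} : ℝ) =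
    Fintype.card ι * (Fintype.card ι + 1) / 2 := by
  rw [← Fintype.card_congr Sym2.sortEquiv, Sym2.card, Nat.cast_choose_two]
  push_cast; ring

lemma card_Icc_neg_floor_le {y : ℝ} (hy : 0 ≤ y) :
    (#(Icc (-⌊y⌋) ⌊y⌋) : ℝ) ≤ 2 * y + 1 := by
  have h0 : 0 ≤ ⌊y⌋ := Int.floor_nonneg.mpr hy
  rw [Int.card_Icc, ← Int.cast_natCast, Int.toNat_of_nonneg (by omega)]
  push_cast
  linarith [Int.floor_le y]

lemma halfIntegralBox_finite_and_ncard_le (M : ι → ι → ℝ) (hM : ∀ i j, 1 ≤ M i j) :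
    (halfIntegralBox M).Finite ∧
      ((halfIntegralBox M).ncard : ℝ) ≤
        ∏ p : {p : ι × ι // p.1 ≤ p.2}, 5 * M p.1.1 p.1.2 := by
  set G := Fintype.piFinset fun p : {p : ι × ι // p.1 ≤ p.2} =>
    Icc (-⌊2 * M p.1.1 p.1.2⌋) ⌊2 * M p.1.1 p.1.2⌋
  have hmaps : ∀ T ∈ halfIntegralBox M,
      (fun p : {p : ι × ι // p.1 ≤ p.2} => ⌊2 * T p.1.1 p.1.2⌋) ∈ G := by
    intro T hT
    refine Fintype.mem_piFinset.mpr fun p => mem_Icc.mpr (abs_le.mp ?_)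
    rw [Int.le_floor, Int.cast_abs, cast_floor_two_mul_of_mem_halfIntegralBox hT, abs_mul,
      abs_two]
    linarith [(hT.2 p.1.1 p.1.2).2]
  have hinj := injOn_floor_halfIntegralBox M
  refine ⟨Set.Finite.of_injOn hmaps hinj G.finite_toSet, ?_⟩
  calc ((halfIntegralBox M).ncard : ℝ) ≤ #G := by
        exact_mod_cast (Set.ncard_le_ncard_of_injOn _ hmaps hinj G.finite_toSet).trans_eq
          (Set.ncard_coe_finset G)
    _ ≤ ∏ p : {p : ι × ι // p.1 ≤ p.2}, 5 * M p.1.1 p.1.2 := by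
        rw [Fintype.card_piFinset]; push_cast
        refine prod_le_prod (fun _ _ => by positivity) fun p _ => ?_
        -- at most `2 ⌊2 M⌋ + 1 ≤ 4 M + 1 ≤ 5 M` integers lie in `[-2 M, 2 M]`
        have := hM p.1.1 p.1.2
        linarith [card_Icc_neg_floor_le (y := 2 * M p.1.1 p.1.2) (by linarith)]

end UpperTriangle

section HalfIntegral

variable {n : ℕ} {T Y : Matrix (Fin n) (Fin n) ℝ} {r : ℝ}

lemma IsHalfIntegral.one_le_diag (hT : IsHalfIntegral T) (i : Fin n) : 1 ≤ T i i := by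
  obtain ⟨z, hz⟩ := hT.2.1 i
  have hpos : (0 : ℝ) < z := hz ▸ hT.1.diag_pos
  rw [hz]
  exact_mod_cast (Int.cast_pos.mp hpos : 0 < z)

lemma sum_diag_mul_diag_le_mul_trace (hr : 0 < r) (hT : T.PosSemidef)
    (hYD : LoewnerLE (r⁻¹ • diagPart Y) Y) : ∑ i, T i i * Y i i ≤ r * (T * Y).trace := by
  have h := hT.trace_mul_nonneg hYD
  have hD : (T * diagPart Y).trace = ∑ i, T i i * Y i i := by
    simp [diagPart, Matrix.trace, Matrix.mul_diagonal]
  rw [Matrix.mul_sub, Matrix.trace_sub, Matrix.mul_smul, Matrix.trace_smul, smul_eq_mul, hD] at h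
  have := mul_le_mul_of_nonneg_left (sub_nonneg.mp h) hr.le
  rwa [← mul_assoc, mul_inv_cancel₀ hr.ne', one_mul] at this

lemma IsHalfIntegral.diag_le_of_trace_mul_le {x : ℝ} (hr : 0 < r) (hT : IsHalfIntegral T)
    (hY : Y.PosDef) (hYD : LoewnerLE (r⁻¹ • diagPart Y) Y) (hTY : (T * Y).trace ≤ x)
    (i : Fin n) : T i i ≤ r * x / Y i i := by
  rw [le_div_iff₀ hY.diag_pos]
  calc T i i * Y i i ≤ ∑ j, T j j * Y j j :=
        single_le_sum (f := fun j => T j j * Y j j)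
          (fun j _ => mul_nonneg hT.1.posSemidef.diag_nonneg hY.diag_pos.le) (mem_univ i)
    _ ≤ r * (T * Y).trace := sum_diag_mul_diag_le_mul_trace hr hT.1.posSemidef hYD
    _ ≤ r * x := by gcongr

lemma setOf_isHalfIntegral_trace_le_subset_halfIntegralBox (hr : 0 < r) (hY : Y.PosDef)
    (hYD : LoewnerLE (r⁻¹ • diagPart Y) Y) (x : ℝ) :
    {T | IsHalfIntegral T ∧ (T * Y).trace ≤ x} ⊆
      halfIntegralBox fun i j => √(r * x / Y i i) * √(r * x / Y j j) := by
  rintro T ⟨hT, hTY⟩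
  refine ⟨(Matrix.conjTranspose_eq_transpose_of_trivial T).symm.trans hT.1.isHermitian,
    fun i j => ⟨hT.2.2 i j, ?_⟩⟩
  have hdiag := hT.diag_le_of_trace_mul_le hr hY hYD hTY
  calc |T i j| ≤ √(T i i) * √(T j j) := hT.1.posSemidef.abs_apply_le_sqrt_mul_sqrt i j
    _ ≤ √(r * x / Y i i) * √(r * x / Y j j) := by gcongr <;> apply hdiag

lemma prod_subtype_fst_le_snd_sqrt_div_diag_le (hY : Y.PosDef) {a : ℝ} (ha : 0 ≤ a) :
    ∏ p : {p : Fin n × Fin n // p.1 ≤ p.2},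
        5 * (√(a / Y p.1.1 p.1.1) * √(a / Y p.1.2 p.1.2)) ≤
      (5 * a) ^ ((n * (n + 1) : ℝ) / 2) * Y.det ^ (-((n : ℝ) + 1) / 2) := by
  have hYd : ∀ i, 0 ≤ Y i i := fun i => hY.diag_pos.le
  have hsqrt : ∀ y, 0 ≤ y →
      √(a / y) ^ (n + 1) = a ^ (((n : ℝ) + 1) / 2) * y ^ (-((n : ℝ) + 1) / 2) := by
    intro y hy
    rw [Real.sqrt_eq_rpow, ← Real.rpow_mul_natCast (div_nonneg ha hy), Real.div_rpow ha hy,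
      div_eq_mul_inv, ← Real.rpow_neg hy]
    push_cast; ring_nf
  have hN := card_subtype_fst_le_snd (ι := Fin n)
  rw [Fintype.card_fin] at hN
  rw [prod_mul_distrib, prod_const, prod_subtype_fst_le_snd_mul fun i => √(a / Y i i), card_univ,
    ← Real.rpow_natCast 5, hN, Fintype.card_fin, ← prod_pow,
    prod_congr rfl fun i _ => hsqrt _ (hYd i), prod_mul_distrib, prod_const, card_univ,
    Fintype.card_fin, ← Real.rpow_mul_natCast ha, Real.finsetProd_rpow _ _ fun i _ => hYd i,
    show ((n : ℝ) + 1) / 2 * n = n * (n + 1) / 2 by ring, ← mul_assoc,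
    ← Real.mul_rpow (by norm_num) ha]
  have hexp : -((n : ℝ) + 1) / 2 ≤ 0 := by linarith [n.cast_nonneg (α := ℝ)]
  exact mul_le_mul_of_nonneg_left
    (Real.rpow_le_rpow_of_nonpos hY.det_pos hY.det_le_prod_diag hexp) (by positivity)

end HalfIntegral

theorem statement1_general {n : ℕ} (c r : ℝ) (hc : 0 < c) (hr : 1 ≤ r) :
    ∃ C : ℝ, 0 < C ∧ ∀ k : ℝ, 1 ≤ k →
      ∀ Y : Matrix (Fin n) (Fin n) ℝ, Y.PosDef →
        LoewnerLE (r⁻¹ • diagPart Y) Y →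
        {T : Matrix (Fin n) (Fin n) ℝ |
            IsHalfIntegral T ∧ (T * Y).trace ≤ c * k}.Finite ∧
        ({T : Matrix (Fin n) (Fin n) ℝ |
            IsHalfIntegral T ∧ (T * Y).trace ≤ c * k}.ncard : ℝ)
          ≤ C * k ^ ((n * (n + 1) : ℝ) / 2) * Y.det ^ (-((n : ℝ) + 1) / 2) := by
  have hr0 : 0 < r := by linarith
  refine ⟨(5 * c * r) ^ ((n * (n + 1) : ℝ) / 2), by positivity, fun k hk Y hY hYD => ?_⟩
  set S := {T : Matrix (Fin n) (Fin n) ℝ | IsHalfIntegral T ∧ (T * Y).trace ≤ c * k}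
  set h : Fin n → ℝ := fun i => √(r * (c * k) / Y i i)
  have hSM : S ⊆ halfIntegralBox fun i j => h i * h j :=
    setOf_isHalfIntegral_trace_le_subset_halfIntegralBox hr0 hY hYD (c * k)
  rcases S.eq_empty_or_nonempty with hS | ⟨T₀, hT₀, hT₀Y⟩
  · rw [hS, Set.ncard_empty, Nat.cast_zero]
    exact ⟨Set.finite_empty, mul_nonneg (by positivity) (Real.rpow_nonneg hY.det_pos.le _)⟩
  -- the diagonal of any `T₀ ∈ S` satisfies `1 ≤ T₀ i i ≤ h i ^ 2`
  have hh : ∀ i, 1 ≤ h i := fun i => Real.one_le_sqrt.mpr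
    ((hT₀.one_le_diag i).trans (hT₀.diag_le_of_trace_mul_le hr0 hY hYD hT₀Y i))
  obtain ⟨hfin, hcard⟩ := halfIntegralBox_finite_and_ncard_le (fun i j => h i * h j)
    fun i j => one_le_mul_of_one_le_of_one_le (hh i) (hh j)
  refine ⟨hfin.subset hSM, ?_⟩
  calc (S.ncard : ℝ) ≤ (halfIntegralBox fun i j => h i * h j).ncard := by
        exact_mod_cast Set.ncard_le_ncard hSM hfin
    _ ≤ ∏ p : {p : Fin n × Fin n // p.1 ≤ p.2}, 5 * (h p.1.1 * h p.1.2) := hcard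
    _ ≤ (5 * (r * (c * k))) ^ ((n * (n + 1) : ℝ) / 2) * Y.det ^ (-((n : ℝ) + 1) / 2) :=
        prod_subtype_fst_le_snd_sqrt_div_diag_le hY (by positivity)
    _ = (5 * c * r) ^ ((n * (n + 1) : ℝ) / 2) * k ^ ((n * (n + 1) : ℝ) / 2) *
          Y.det ^ (-((n : ℝ) + 1) / 2) := by
        rw [← Real.mul_rpow (by positivity) (by positivity)]
        ring_nf

theorem statement1 {n : ℕ} (hn : 1 ≤ n) (c r : ℝ) (hc : 0 < c) (hr : 1 ≤ r) :
    ∃ C : ℝ, 0 < C ∧ ∀ k : ℝ, 1 ≤ k →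
      ∀ Y : Matrix (Fin n) (Fin n) ℝ, Y.PosDef →
        LoewnerLE (r⁻¹ • diagPart Y) Y →
        {T : Matrix (Fin n) (Fin n) ℝ |
            IsHalfIntegral T ∧ (T * Y).trace ≤ c * k}.Finite ∧
        ({T : Matrix (Fin n) (Fin n) ℝ |
            IsHalfIntegral T ∧ (T * Y).trace ≤ c * k}.ncard : ℝ)
          ≤ C * k ^ ((n * (n + 1) : ℝ) / 2) * Y.det ^ (-((n : ℝ) + 1) / 2) :=
  statement1_general c r hc hr
end

section
/- Let n ≥ 1 be an integer, let Z = X + iY be an n×n complex symmetric matrix with X, Y real symmetric and Y positive definite, and let R be any n×n real symmetric matrix. Then |det(Z + R)| ≥ det(Y). -/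
open scoped Real

/-- `Z = X + iY` as a complex matrix. -/
noncomputable def siegelZ {n : ℕ} (X Y : Matrix (Fin n) (Fin n) ℝ) :
    Matrix (Fin n) (Fin n) ℂ :=
  X.map (fun x => (x : ℂ)) + Complex.I • Y.map (fun x => (x : ℂ))

/-!
Put `A = X + R`, so that `Z + R = A + iY` with `A` real symmetric. Writing `Y = S²` with `S` the
Hermitian square root, `A + iY = S (B + i) S` for the Hermitian matrix `B = S⁻¹ A S⁻¹`. Hence
`|det (Z + R)| = det Y · ∏ⱼ |λⱼ + i|` over the real eigenvalues `λⱼ` of `B`, and each factor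
`|λⱼ + i|` is at least `1`.
-/

open Matrix
open scoped ComplexOrder

namespace Matrix

variable {n : Type*} [Fintype n] [DecidableEq n]

open scoped MatrixOrder in
theorem PosSemidef.exists_isHermitian_mul_self_eq {𝕜 : Type*} [RCLike 𝕜] {Y : Matrix n n 𝕜}
    (hY : Y.PosSemidef) : ∃ S : Matrix n n 𝕜, S.IsHermitian ∧ S * S = Y :=
  ⟨CFC.sqrt Y, (CFC.sqrt_nonneg Y).posSemidef.isHermitian, CFC.sqrt_mul_sqrt_self Y hY.nonneg⟩

theorem PosSemidef.map_ofReal {Y : Matrix n n ℝ} (hY : Y.PosSemidef) :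
    (Y.map ((↑) : ℝ → ℂ)).PosSemidef := by
  obtain ⟨S, hS, rfl⟩ := hY.exists_isHermitian_mul_self_eq
  have hSc := hS.map Complex.ofRealHom fun _ => (Complex.conj_ofReal _).symm
  have := posSemidef_conjTranspose_mul_self (S.map Complex.ofRealHom)
  rwa [hSc.eq, ← Matrix.map_mul] at this

open Polynomial in
theorem IsHermitian.det_add_I_smul_one {B : Matrix n n ℂ} (hB : B.IsHermitian) :
    (B + Complex.I • 1).det = ∏ i, (hB.eigenvalues i + Complex.I) := by
  have h := congrArg (eval (-Complex.I)) hB.charpoly_eq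
  have hneg : scalar n (-Complex.I) - B = -(B + Complex.I • 1) := by
    rw [scalar_apply, ← smul_one_eq_diagonal, neg_add, neg_smul, sub_eq_add_neg, add_comm]
  have hfactor (x : ℂ) : -Complex.I - x = -(x + Complex.I) := by ring
  rw [eval_charpoly, hneg, det_neg, eval_prod] at h
  simp only [eval_sub, eval_X, eval_C, hfactor, Finset.prod_neg] at h
  exact mul_left_cancel₀ (pow_ne_zero _ (neg_ne_zero.2 one_ne_zero)) h

theorem IsHermitian.one_le_norm_det_add_I_smul_one {B : Matrix n n ℂ} (hB : B.IsHermitian) :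
    1 ≤ ‖(B + Complex.I • 1).det‖ := by
  rw [hB.det_add_I_smul_one, norm_prod]
  refine Finset.one_le_prod fun i _ => ?_
  calc (1 : ℝ) = |(hB.eigenvalues i + Complex.I).im| := by simp
    _ ≤ _ := Complex.abs_im_le_norm _

theorem IsHermitian.norm_det_le_norm_det_add_I_smul {A Y : Matrix n n ℂ}
    (hA : A.IsHermitian) (hY : Y.PosSemidef) :
    ‖Y.det‖ ≤ ‖(A + Complex.I • Y).det‖ := by
  obtain ⟨S, hS, rfl⟩ := hY.exists_isHermitian_mul_self_eq
  by_cases hSdet : IsUnit S.det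
  swap
  · rw [isUnit_iff_ne_zero, not_not] at hSdet
    simp [det_mul, hSdet]
  set B := S⁻¹ * A * S⁻¹
  have hB : B.IsHermitian := by
    simpa [B, conjTranspose_nonsing_inv, hS.eq] using isHermitian_conjTranspose_mul_mul S⁻¹ hA
  have hfactor : A + Complex.I • (S * S) = S * (B + Complex.I • 1) * S := by
    rw [mul_add, add_mul, Matrix.mul_smul, Matrix.smul_mul, mul_one]
    congr 1
    simp only [B, ← mul_assoc, mul_nonsing_inv _ hSdet, one_mul, mul_assoc _ S⁻¹,
      nonsing_inv_mul _ hSdet, mul_one]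
  calc ‖(S * S).det‖ = ‖(S * S).det‖ * 1 := (mul_one _).symm
    _ ≤ ‖(S * S).det‖ * ‖(B + Complex.I • 1).det‖ := by
      gcongr; exact hB.one_le_norm_det_add_I_smul_one
    _ = ‖(A + Complex.I • (S * S)).det‖ := by
      simp only [hfactor, det_mul, norm_mul]; ring

end Matrix

theorem statement8_general {n : ℕ} (X Y R : Matrix (Fin n) (Fin n) ℝ)
    (hX : X.IsSymm) (hY : Y.PosDef) (hR : R.IsSymm) :
    Y.det ≤ ‖(siegelZ X Y + R.map (fun x => (x : ℂ))).det‖ := by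
  have hsum : siegelZ X Y + R.map (fun x => (x : ℂ))
      = (X + R).map (↑) + Complex.I • Y.map (↑) := by
    rw [siegelZ, Matrix.map_add _ Complex.ofReal_add]; abel
  have hXR : ((X + R).map ((↑) : ℝ → ℂ)).IsHermitian :=
    (isHermitian_iff_isSymm.2 (hX.add hR)).map _ fun _ => (Complex.conj_ofReal _).symm
  have hdetY : ‖(Y.map ((↑) : ℝ → ℂ)).det‖ = Y.det := by
    rw [show (Y.map ((↑) : ℝ → ℂ)).det = Y.det from (RingHom.map_det Complex.ofRealHom Y).symm,
      Complex.norm_real, Real.norm_of_nonneg hY.det_pos.le]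
  rw [hsum, ← hdetY]
  exact hXR.norm_det_le_norm_det_add_I_smul hY.posSemidef.map_ofReal

theorem statement8 {n : ℕ} (hn : 1 ≤ n) (X Y R : Matrix (Fin n) (Fin n) ℝ)
    (hX : X.IsSymm) (hYsymm : Y.IsSymm) (hY : Y.PosDef) (hR : R.IsSymm) :
    Y.det ≤ ‖(siegelZ X Y + R.map (fun x => (x : ℂ))).det‖ :=
  statement8_general X Y R hX hY hR
end

section
/- Let m ≥ 1 be an integer, let J denote the 4×4 matrix with 2×2 block form [[0, −1₂],[1₂, 0]], let S(m) := {M ∈ M₄(ℤ) : Mᵀ J M = m·J}, and let Γ₂ := Sp₄(ℤ) = {γ ∈ M₄(ℤ) : γᵀ J γ = J} act on S(m) by left multiplication. Then the number of orbits of this action (the number of right cosets Γ₂\S(m)) is at most m³ · σ₀(m)², where σ₀(m) denotes the number of positive divisors of m. -/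
open scoped Matrix

/-- The standard symplectic form `J = [[0, −1₂],[1₂, 0]]` as a `4 × 4` integer
matrix (indexed by `Fin 2 ⊕ Fin 2`). -/
def Jsymp : Matrix (Fin 2 ⊕ Fin 2) (Fin 2 ⊕ Fin 2) ℤ :=
  Matrix.fromBlocks 0 (-1) 1 0

/-- `S(m)`: integer matrices `M` with `Mᵀ J M = m • J`. -/
def Sm (m : ℕ) : Set (Matrix (Fin 2 ⊕ Fin 2) (Fin 2 ⊕ Fin 2) ℤ) :=
  {M | Mᵀ * Jsymp * M = (m : ℤ) • Jsymp}

/-- `Γ₂ = Sp₄(ℤ)`: integer matrices `γ` with `γᵀ J γ = J`. -/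
def Gamma2 : Set (Matrix (Fin 2 ⊕ Fin 2) (Fin 2 ⊕ Fin 2) ℤ) :=
  {γ | γᵀ * Jsymp * γ = Jsymp}

/-!
Row reduction by elements of `Sp₄(ℤ)` — the two copies of `SL₂(ℤ)` acting on the coordinate
pairs `(xᵢ, yᵢ)`, the block diagonal matrices `diag(U, U⁻ᵀ)` and the translations
`[[1, S], [0, 1]]` with `S` symmetric — brings every `M ∈ S(m)` to the form `[[A, B], [0, D]]`
with `A = [[a, b], [0, c]]` in Hermite normal form and `B` reduced modulo `S D`. There
`Aᵀ D = m` forces `a d₀ = c d₁ = m` for the diagonal entries `d₀, d₁` of `D`, so such a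
representative is determined by two divisors `a, c` of `m`, by `b mod c` and by three entries of
`B` taken modulo `d₀, d₁, d₁`. This gives at most `∑ c d₀ d₁² = ∑ m d₀ d₁ ≤ σ₀(m)² m³` of them.
-/

open Matrix

section Symplectic

variable {l R : Type*} [Fintype l] [DecidableEq l] [CommRing R]

theorem Matrix.fromBlocks_transpose_mul_J_mul (A B C D : Matrix l l R) :
    (fromBlocks A B C D)ᵀ * J l R * fromBlocks A B C D =
      fromBlocks (Cᵀ * A - Aᵀ * C) (Cᵀ * B - Aᵀ * D) (Dᵀ * A - Bᵀ * C) (Dᵀ * B - Bᵀ * D) := by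
  simp [J, fromBlocks_transpose, fromBlocks_multiply, sub_eq_add_neg, add_comm]

theorem Matrix.fromBlocks_diagonal_mem_symplecticGroup {p q r s : l → R}
    (h : ∀ i, p i * s i - q i * r i = 1) :
    fromBlocks (diagonal p) (diagonal q) (diagonal r) (diagonal s) ∈ symplecticGroup l R := by
  simp only [SymplecticGroup.fromBlocks_mem_iff, diagonal_transpose, diagonal_mul_diagonal,
    diagonal_sub]
  refine ⟨by simp only [mul_comm], by simp only [mul_comm], ?_⟩
  simp only [mul_comm (r _), h, diagonal_one]

theorem Matrix.fromBlocks_zero_zero_mem_symplecticGroup {U W : Matrix l l R} (h : Uᵀ * W = 1) :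
    fromBlocks U 0 0 W ∈ symplecticGroup l R := by
  simp [SymplecticGroup.fromBlocks_mem_iff, h]

theorem Matrix.fromBlocks_one_zero_one_mem_symplecticGroup {S : Matrix l l R} (h : Sᵀ = S) :
    fromBlocks 1 S 0 1 ∈ symplecticGroup l R := by
  simp [SymplecticGroup.fromBlocks_mem_iff, h]

theorem Matrix.fromBlocks_zero_zero_mul (U W A B C D : Matrix l l R) :
    fromBlocks U 0 0 W * fromBlocks A B C D = fromBlocks (U * A) (U * B) (W * C) (W * D) := by
  simp [fromBlocks_multiply]

theorem Matrix.fromBlocks_one_zero_one_mul (S A B C D : Matrix l l R) :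
    fromBlocks 1 S 0 1 * fromBlocks A B C D = fromBlocks (A + S * C) (B + S * D) C D := by
  simp [fromBlocks_multiply]

end Symplectic

theorem Jsymp_eq_J : Jsymp = J (Fin 2) ℤ := rfl

theorem mem_Gamma2_iff {γ : Matrix (Fin 2 ⊕ Fin 2) (Fin 2 ⊕ Fin 2) ℤ} :
    γ ∈ Gamma2 ↔ γ ∈ symplecticGroup (Fin 2) ℤ :=
  SymplecticGroup.mem_iff'.symm

theorem mul_mem_Sm {m : ℕ} {γ N : Matrix (Fin 2 ⊕ Fin 2) (Fin 2 ⊕ Fin 2) ℤ} (hγ : γ ∈ Gamma2)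
    (hN : N ∈ Sm m) : γ * N ∈ Sm m := by
  have hγ' : γᵀ * Jsymp * γ = Jsymp := hγ
  have hN' : Nᵀ * Jsymp * N = (m : ℤ) • Jsymp := hN
  calc (γ * N)ᵀ * Jsymp * (γ * N) = Nᵀ * (γᵀ * Jsymp * γ) * N := by
        simp only [transpose_mul, Matrix.mul_assoc]
    _ = (m : ℤ) • Jsymp := by rw [hγ', hN']

theorem mul_mem_Gamma2 {γ δ : Matrix (Fin 2 ⊕ Fin 2) (Fin 2 ⊕ Fin 2) ℤ} (hγ : γ ∈ Gamma2)
    (hδ : δ ∈ Gamma2) : γ * δ ∈ Gamma2 :=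
  mem_Gamma2_iff.mpr (mul_mem (mem_Gamma2_iff.mp hγ) (mem_Gamma2_iff.mp hδ))

theorem exists_mem_Gamma2_mul_eq_one {γ : Matrix (Fin 2 ⊕ Fin 2) (Fin 2 ⊕ Fin 2) ℤ}
    (hγ : γ ∈ Gamma2) : ∃ δ ∈ Gamma2, δ * γ = 1 :=
  let g : symplecticGroup (Fin 2) ℤ := ⟨γ, mem_Gamma2_iff.mp hγ⟩
  ⟨(g⁻¹).1, mem_Gamma2_iff.mpr (g⁻¹).2, congr_arg Subtype.val (inv_mul_cancel g)⟩

theorem fromBlocks_mem_Sm_iff {m : ℕ} {A B C D : Matrix (Fin 2) (Fin 2) ℤ} :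
    fromBlocks A B C D ∈ Sm m ↔
      Aᵀ * C = Cᵀ * A ∧ Bᵀ * D = Dᵀ * B ∧ Aᵀ * D - Cᵀ * B = (m : ℤ) • 1 := by
  rw [Sm, Set.mem_ofPred_eq, Jsymp_eq_J, fromBlocks_transpose_mul_J_mul, J, fromBlocks_smul,
    fromBlocks_inj]
  simp only [smul_zero, smul_neg, sub_eq_zero]
  constructor
  · rintro ⟨h₁, h₂, -, h₄⟩
    exact ⟨h₁.symm, h₄.symm, by rw [← neg_sub, h₂, neg_neg]⟩
  · rintro ⟨h₁, h₂, h₃⟩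
    refine ⟨h₁.symm, by rw [← neg_sub, h₃], ?_, h₂.symm⟩
    simpa [transpose_sub, transpose_mul] using congr_arg transpose h₃

theorem Int.exists_det_eq_one_mul_add_mul_eq_gcd (x y : ℤ) :
    ∃ u v w z : ℤ, u * z - v * w = 1 ∧ u * x + v * y = x.gcd y ∧ w * x + z * y = 0 := by
  rcases eq_or_ne (x.gcd y : ℤ) 0 with hg | hg
  · obtain ⟨rfl, rfl⟩ := Int.gcd_eq_zero_iff.mp (by exact_mod_cast hg)
    exact ⟨1, 0, 0, 1, by simp⟩
  obtain ⟨x', hx⟩ := Int.gcd_dvd_left x y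
  obtain ⟨y', hy⟩ := Int.gcd_dvd_right x y
  have hbez := Int.gcd_eq_gcd_ab x y
  refine ⟨x.gcdA y, x.gcdB y, -y', x', mul_left_cancel₀ hg ?_, by linear_combination -hbez, ?_⟩
  · linear_combination (-(x.gcdA y) * hx - x.gcdB y * hy - hbez)
  · linear_combination x' * hy - y' * hx

theorem pos_of_nonneg_of_mul_eq_natCast {m : ℕ} {a d : ℤ} (hm : m ≠ 0) (ha : 0 ≤ a)
    (h : a * d = m) : 0 < a ∧ 0 < d := by
  have hpos : 0 < a * d := h ▸ by exact_mod_cast Nat.pos_of_ne_zero hm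
  have hd := pos_of_mul_pos_right hpos ha
  exact ⟨pos_of_mul_pos_left hpos hd.le, hd⟩

section Reduction

variable {m : ℕ} {A B C D : Matrix (Fin 2) (Fin 2) ℤ}

theorem exists_mem_Gamma2_lowerLeft_col_eq_zero (A B C D : Matrix (Fin 2) (Fin 2) ℤ) :
    ∃ γ ∈ Gamma2, ∃ A' B' C' D', γ * fromBlocks A B C D = fromBlocks A' B' C' D' ∧
      C' 0 0 = 0 ∧ C' 1 0 = 0 := by
  choose p q r s hdet _ hr using fun i ↦
    Int.exists_det_eq_one_mul_add_mul_eq_gcd (A i 0) (C i 0)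
  refine ⟨_, mem_Gamma2_iff.mpr (fromBlocks_diagonal_mem_symplecticGroup hdet), _, _, _, _,
    fromBlocks_multiply .., ?_⟩
  simp [diagonal_mul, hr]

theorem exists_mem_Gamma2_firstCol_eq_single (hC₀ : C 0 0 = 0) (hC₁ : C 1 0 = 0) :
    ∃ γ ∈ Gamma2, ∃ A' B' C' D', γ * fromBlocks A B C D = fromBlocks A' B' C' D' ∧
      0 ≤ A' 0 0 ∧ A' 1 0 = 0 ∧ C' 0 0 = 0 ∧ C' 1 0 = 0 := by
  obtain ⟨u, v, w, z, hdet, hu, hw⟩ := Int.exists_det_eq_one_mul_add_mul_eq_gcd (A 0 0) (A 1 0)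
  have hUW : !![u, v; w, z]ᵀ * !![z, -w; -v, u] = 1 := by
    ext i j; fin_cases i <;> fin_cases j <;> simp [mul_apply, Fin.sum_univ_two] <;> linarith
  refine ⟨_, mem_Gamma2_iff.mpr (fromBlocks_zero_zero_mem_symplecticGroup hUW), _, _, _, _,
    fromBlocks_zero_zero_mul .., ?_⟩
  simp [mul_apply, Fin.sum_univ_two, hu, hw, hC₀, hC₁]

theorem exists_mem_Gamma2_lowerLeft_eq_zero (hm : m ≠ 0) (hN : fromBlocks A B C D ∈ Sm m)
    (hA₀ : 0 ≤ A 0 0) (hA : A 1 0 = 0) (hC₀ : C 0 0 = 0) (hC₁ : C 1 0 = 0) :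
    ∃ γ ∈ Gamma2, ∃ A' B' D', γ * fromBlocks A B C D = fromBlocks A' B' 0 D' ∧
      0 ≤ A' 0 0 ∧ A' 1 0 = 0 ∧ 0 ≤ A' 1 1 := by
  obtain ⟨hsymm, -, hdet⟩ := fromBlocks_mem_Sm_iff.mp hN
  have ha : A 0 0 ≠ 0 := by
    have := congr_fun₂ hdet 0 0
    simp [mul_apply, Fin.sum_univ_two, hA, hC₀, hC₁] at this
    rintro h
    simp [h, eq_comm, hm] at this
  -- the first column is `(a, 0, 0, 0)` with `a ≠ 0`, and `Aᵀ C` is symmetric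
  have hC₂ : C 0 1 = 0 := by
    have := congr_fun₂ hsymm 0 1
    simpa [mul_apply, Fin.sum_univ_two, hA, hC₀, hC₁, ha] using this
  obtain ⟨u, v, w, z, hdet', hu, hw⟩ := Int.exists_det_eq_one_mul_add_mul_eq_gcd (A 1 1) (C 1 1)
  have hmem : fromBlocks (diagonal ![1, u]) (diagonal ![0, v]) (diagonal ![0, w])
      (diagonal ![1, z]) ∈ Gamma2 :=
    mem_Gamma2_iff.mpr
      (fromBlocks_diagonal_mem_symplecticGroup (by simp [Fin.forall_fin_two, hdet']))
  have hC : diagonal ![0, w] * A + diagonal ![1, z] * C = 0 := by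
    ext i j; fin_cases i <;> fin_cases j <;> simp [diagonal_mul, hA, hC₀, hC₁, hC₂, hw]
  refine ⟨_, hmem, ?_⟩
  rw [fromBlocks_multiply, hC]
  exact ⟨_, _, _, rfl, by simp [diagonal_mul, hA₀, hA, hC₁, hu]⟩

theorem entries_of_fromBlocks_zero_mem_Sm (hm : m ≠ 0) (hN : fromBlocks A B 0 D ∈ Sm m)
    (hA : A 1 0 = 0) :
    A 0 0 * D 0 0 = m ∧ D 0 1 = 0 ∧ A 0 1 * D 0 0 + A 1 1 * D 1 0 = 0 ∧ A 1 1 * D 1 1 = m ∧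
      B 1 0 * D 1 1 = D 0 0 * B 0 1 + D 1 0 * B 1 1 := by
  obtain ⟨-, hsymm, hdet⟩ := fromBlocks_mem_Sm_iff.mp hN
  have h : ∀ i j, (Aᵀ * D) i j = ((m : ℤ) • 1 : Matrix (Fin 2) (Fin 2) ℤ) i j := by
    simpa using congr_fun₂ hdet
  have h₀₀ := h 0 0
  have h₀₁ := h 0 1
  have h₁₀ := h 1 0
  have h₁₁ := h 1 1
  have hB := congr_fun₂ hsymm 0 1
  simp [mul_apply, Fin.sum_univ_two, hA] at h₀₀ h₀₁ h₁₀ h₁₁ hB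
  have hD : D 0 1 = 0 := h₀₁.resolve_left (by rintro h; simp [h, eq_comm, hm] at h₀₀)
  refine ⟨h₀₀, hD, h₁₀, by simpa [hD] using h₁₁, by simpa [hD] using hB⟩

theorem exists_mem_Gamma2_reduce_upperLeft (hA : A 1 0 = 0) :
    ∃ γ ∈ Gamma2, ∃ B' D', γ * fromBlocks A B 0 D =
      fromBlocks !![A 0 0, A 0 1 % A 1 1; 0, A 1 1] B' 0 D' := by
  set q := A 0 1 / A 1 1
  have hUW : !![1, -q; 0, 1]ᵀ * !![1, 0; q, 1] = 1 := by
    ext i j; fin_cases i <;> fin_cases j <;> simp [mul_apply, Fin.sum_univ_two]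
  refine ⟨_, mem_Gamma2_iff.mpr (fromBlocks_zero_zero_mem_symplecticGroup hUW),
    !![1, -q; 0, 1] * B, !![1, 0; q, 1] * D, ?_⟩
  rw [fromBlocks_zero_zero_mul, Matrix.mul_zero]
  congr 1
  ext i j; fin_cases i <;> fin_cases j <;> simp [mul_apply, Fin.sum_univ_two, hA, Int.emod_def]
  ring

theorem exists_mem_Gamma2_reduce_upperRight (hD : D 0 1 = 0) (hD₀ : 0 < D 0 0)
    (hD₁ : 0 < D 1 1) :
    ∃ γ ∈ Gamma2, ∃ B', γ * fromBlocks A B 0 D = fromBlocks A B' 0 D ∧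
      0 ≤ B' 0 0 ∧ B' 0 0 < D 0 0 ∧ 0 ≤ B' 0 1 ∧ B' 0 1 < D 1 1 ∧
      0 ≤ B' 1 1 ∧ B' 1 1 < D 1 1 := by
  set s₁ := -(B 0 1 / D 1 1)
  -- `B 0 0` moves by `s₀ * D 0 0 + s₁ * D 1 0`, so `s₀` is chosen after `s₁`
  set s₀ := -((B 0 0 + s₁ * D 1 0) / D 0 0)
  set S := !![s₀, s₁; s₁, -(B 1 1 / D 1 1)]
  have hS : Sᵀ = S := by ext i j; fin_cases i <;> fin_cases j <;> rfl
  refine ⟨_, mem_Gamma2_iff.mpr (fromBlocks_one_zero_one_mem_symplecticGroup hS), B + S * D, ?_⟩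
  rw [fromBlocks_one_zero_one_mul, Matrix.mul_zero, add_zero]
  have h₀₀ : (B + S * D) 0 0 = (B 0 0 + s₁ * D 1 0) % D 0 0 := by
    simp [S, s₀, vecMul, dotProduct, Fin.sum_univ_two, Int.emod_def]; ring
  have h₀₁ : (B + S * D) 0 1 = B 0 1 % D 1 1 := by
    simp [S, s₁, vecMul, dotProduct, Fin.sum_univ_two, hD, Int.emod_def]; ring
  have h₁₁ : (B + S * D) 1 1 = B 1 1 % D 1 1 := by
    simp [S, vecMul, dotProduct, Fin.sum_univ_two, hD, Int.emod_def]; ring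
  rw [h₀₀, h₀₁, h₁₁]
  exact ⟨rfl, Int.emod_nonneg _ hD₀.ne', Int.emod_lt_of_pos _ hD₀, Int.emod_nonneg _ hD₁.ne',
    Int.emod_lt_of_pos _ hD₁, Int.emod_nonneg _ hD₁.ne', Int.emod_lt_of_pos _ hD₁⟩

theorem exists_mem_Gamma2_mul_eq_fromBlocks_zero {M : Matrix (Fin 2 ⊕ Fin 2) (Fin 2 ⊕ Fin 2) ℤ}
    (hm : m ≠ 0) (hM : M ∈ Sm m) :
    ∃ γ ∈ Gamma2, ∃ A B D, γ * M = fromBlocks A B 0 D ∧ 0 < A 0 0 ∧ A 1 0 = 0 ∧ 0 < A 1 1 := by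
  obtain ⟨γ₁, hγ₁, A₁, B₁, C₁, D₁, h₁, hC₁₀, hC₁₁⟩ :=
    exists_mem_Gamma2_lowerLeft_col_eq_zero M.toBlocks₁₁ M.toBlocks₁₂ M.toBlocks₂₁ M.toBlocks₂₂
  rw [fromBlocks_toBlocks] at h₁
  obtain ⟨γ₂, hγ₂, A₂, B₂, C₂, D₂, h₂, hA₂₀, hA₂₁, hC₂₀, hC₂₁⟩ :=
    exists_mem_Gamma2_firstCol_eq_single (A := A₁) (B := B₁) (D := D₁) hC₁₀ hC₁₁
  have hM₂ : γ₂ * (γ₁ * M) ∈ Sm m := mul_mem_Sm hγ₂ (mul_mem_Sm hγ₁ hM)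
  rw [h₁, h₂] at hM₂
  obtain ⟨γ₃, hγ₃, A, B, D, h₃, hA₀, hA₁, hA₂⟩ :=
    exists_mem_Gamma2_lowerLeft_eq_zero hm hM₂ hA₂₀ hA₂₁ hC₂₀ hC₂₁
  have hM₃ := h₃ ▸ mul_mem_Sm hγ₃ hM₂
  obtain ⟨ha, -, -, hc, -⟩ := entries_of_fromBlocks_zero_mem_Sm hm hM₃ hA₁
  refine ⟨γ₃ * γ₂ * γ₁, mul_mem_Gamma2 (mul_mem_Gamma2 hγ₃ hγ₂) hγ₁, A, B, D, ?_,
    (pos_of_nonneg_of_mul_eq_natCast hm hA₀ ha).1, hA₁,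
    (pos_of_nonneg_of_mul_eq_natCast hm hA₂ hc).1⟩
  rw [Matrix.mul_assoc, Matrix.mul_assoc, h₁, h₂, h₃]

end Reduction

/-- `A` is in Hermite normal form and `B` is reduced modulo the translations `B ↦ B + S D`,
`S` symmetric. `B 1 0` is left free: the symmetry of `Dᵀ B` determines it. -/
def IsReducedBlocks (A B D : Matrix (Fin 2) (Fin 2) ℤ) : Prop :=
  A 1 0 = 0 ∧ 0 < A 0 0 ∧ 0 < A 1 1 ∧ 0 ≤ A 0 1 ∧ A 0 1 < A 1 1 ∧
    0 ≤ B 0 0 ∧ B 0 0 < D 0 0 ∧ 0 ≤ B 0 1 ∧ B 0 1 < D 1 1 ∧ 0 ≤ B 1 1 ∧ B 1 1 < D 1 1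

def reducedSet (m : ℕ) : Set (Matrix (Fin 2 ⊕ Fin 2) (Fin 2 ⊕ Fin 2) ℤ) :=
  {N | N ∈ Sm m ∧ ∃ A B D, N = fromBlocks A B 0 D ∧ IsReducedBlocks A B D}

theorem exists_mem_Gamma2_mul_mem_reducedSet {m : ℕ}
    {M : Matrix (Fin 2 ⊕ Fin 2) (Fin 2 ⊕ Fin 2) ℤ} (hm : m ≠ 0) (hM : M ∈ Sm m) :
    ∃ γ ∈ Gamma2, γ * M ∈ reducedSet m := by
  obtain ⟨γ₁, hγ₁, A, B₁, D₁, h₁, ha, hA, hc⟩ := exists_mem_Gamma2_mul_eq_fromBlocks_zero hm hM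
  obtain ⟨γ₂, hγ₂, B₂, D, h₂⟩ := exists_mem_Gamma2_reduce_upperLeft (B := B₁) (D := D₁) hA
  have hM₂ : γ₂ * (γ₁ * M) ∈ Sm m := mul_mem_Sm hγ₂ (mul_mem_Sm hγ₁ hM)
  rw [h₁, h₂] at hM₂
  obtain ⟨had, hD, -, hcd, -⟩ := entries_of_fromBlocks_zero_mem_Sm hm hM₂ rfl
  obtain ⟨γ₃, hγ₃, B, h₃, hB⟩ := exists_mem_Gamma2_reduce_upperRight hD
    (pos_of_nonneg_of_mul_eq_natCast hm ha.le had).2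
    (pos_of_nonneg_of_mul_eq_natCast hm hc.le hcd).2
  have hN : γ₃ * γ₂ * γ₁ * M = fromBlocks !![A 0 0, A 0 1 % A 1 1; 0, A 1 1] B 0 D := by
    rw [Matrix.mul_assoc, Matrix.mul_assoc, h₁, h₂, h₃]
  refine ⟨γ₃ * γ₂ * γ₁, mul_mem_Gamma2 (mul_mem_Gamma2 hγ₃ hγ₂) hγ₁, ?_, _, _, _, hN, ?_⟩
  · rw [hN, ← h₃]
    exact mul_mem_Sm hγ₃ hM₂
  · simpa [IsReducedBlocks, ha, hc, Int.emod_nonneg _ hc.ne', Int.emod_lt_of_pos _ hc] using hB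

section Counting

open Finset

def reducedParams (N : Matrix (Fin 2 ⊕ Fin 2) (Fin 2 ⊕ Fin 2) ℤ) :
    ((ℕ × ℕ) × (ℕ × ℕ)) × ℕ × ℕ × ℕ × ℕ :=
  ((((N.toBlocks₁₁ 0 0).natAbs, (N.toBlocks₂₂ 0 0).natAbs),
    ((N.toBlocks₁₁ 1 1).natAbs, (N.toBlocks₂₂ 1 1).natAbs)),
    (N.toBlocks₁₁ 0 1).natAbs, (N.toBlocks₁₂ 0 0).natAbs, (N.toBlocks₁₂ 0 1).natAbs,
    (N.toBlocks₁₂ 1 1).natAbs)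

/-- The pairs `(a, d₀)` and `(c, d₁)` are the diagonal entries of `A` and `D`. -/
def paramSet (m : ℕ) : Finset (((ℕ × ℕ) × (ℕ × ℕ)) × ℕ × ℕ × ℕ × ℕ) :=
  (m.divisorsAntidiagonal ×ˢ m.divisorsAntidiagonal).biUnion fun x ↦
    {x} ×ˢ range x.2.1 ×ˢ range x.1.2 ×ˢ range x.2.2 ×ˢ range x.2.2

theorem card_paramSet_le (m : ℕ) : #(paramSet m) ≤ m ^ 3 * #m.divisors ^ 2 := by
  calc #(paramSet m)
      ≤ ∑ x ∈ m.divisorsAntidiagonal ×ˢ m.divisorsAntidiagonal,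
          #({x} ×ˢ range x.2.1 ×ˢ range x.1.2 ×ˢ range x.2.2 ×ˢ range x.2.2) := card_biUnion_le
    _ ≤ ∑ _x ∈ m.divisorsAntidiagonal ×ˢ m.divisorsAntidiagonal, m ^ 3 := by
        refine sum_le_sum fun x hx ↦ ?_
        obtain ⟨hx₁, hx₂⟩ := mem_product.mp hx
        have hd₀ := Nat.divisor_le (Nat.snd_mem_divisors_of_mem_antidiagonal hx₁)
        have hd₁ := Nat.divisor_le (Nat.snd_mem_divisors_of_mem_antidiagonal hx₂)
        have hc := (Nat.mem_divisorsAntidiagonal.mp hx₂).1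
        simp only [card_product, card_singleton, card_range, one_mul]
        calc x.2.1 * (x.1.2 * (x.2.2 * x.2.2)) = (x.2.1 * x.2.2) * x.1.2 * x.2.2 := by ring
          _ ≤ m * m * m := by rw [hc]; gcongr
          _ = m ^ 3 := by ring
    _ = m ^ 3 * #m.divisors ^ 2 := by
        rw [sum_const, card_product, ← Nat.map_div_right_divisors, card_map, smul_eq_mul]
        ring

theorem reducedParams_mem_paramSet {m : ℕ} (hm : m ≠ 0)
    {N : Matrix (Fin 2 ⊕ Fin 2) (Fin 2 ⊕ Fin 2) ℤ} (hN : N ∈ reducedSet m) :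
    reducedParams N ∈ paramSet m := by
  obtain ⟨hNS, A, B, D, rfl, hA, ha, hc, hb₀, hb₁, hB⟩ := hN
  obtain ⟨had, -, -, hcd, -⟩ := entries_of_fromBlocks_zero_mem_Sm hm hNS hA
  simp only [reducedParams, paramSet, toBlocks_fromBlocks₁₁, toBlocks_fromBlocks₁₂,
    toBlocks_fromBlocks₂₂, mem_biUnion, mem_product, mem_singleton, mem_range,
    Nat.mem_divisorsAntidiagonal]
  refine ⟨_, ⟨⟨Int.natAbs_mul_natAbs_eq had, hm⟩, Int.natAbs_mul_natAbs_eq hcd, hm⟩, rfl, ?_⟩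
  dsimp only
  omega

theorem reducedParams_injOn {m : ℕ} (hm : m ≠ 0) : Set.InjOn reducedParams (reducedSet m) := by
  rintro _ ⟨hN, A, B, D, rfl, hA, ha, hc, hb, -, hB₀, -, hB₁, -, hB₂, -⟩
    _ ⟨hN', A', B', D', rfl, hA', ha', hc', hb', -, hB₀', -, hB₁', -, hB₂', -⟩ h
  obtain ⟨had, hD, hbd, hcd, hBD⟩ := entries_of_fromBlocks_zero_mem_Sm hm hN hA
  obtain ⟨had', hD', hbd', hcd', hBD'⟩ := entries_of_fromBlocks_zero_mem_Sm hm hN' hA'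
  have hd₀ := (pos_of_nonneg_of_mul_eq_natCast hm ha.le had).2
  have hd₁ := (pos_of_nonneg_of_mul_eq_natCast hm hc.le hcd).2
  have hd₀' := (pos_of_nonneg_of_mul_eq_natCast hm ha'.le had').2
  have hd₁' := (pos_of_nonneg_of_mul_eq_natCast hm hc'.le hcd').2
  simp only [reducedParams, toBlocks_fromBlocks₁₁, toBlocks_fromBlocks₁₂, toBlocks_fromBlocks₂₂,
    Prod.mk.injEq] at h
  obtain ⟨⟨⟨h₁, h₂⟩, h₃, h₄⟩, h₅, h₆, h₇, h₈⟩ := h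
  have hAA : A = A' := by
    ext i j; fin_cases i <;> fin_cases j <;> dsimp <;> omega
  subst hAA
  have hD₁₀ : D 1 0 = D' 1 0 := by
    have hD₀₀ : D 0 0 = D' 0 0 := by omega
    exact mul_left_cancel₀ hc.ne' (by linear_combination hbd - hbd' - A 0 1 * hD₀₀)
  have hDD : D = D' := by
    ext i j; fin_cases i <;> fin_cases j <;> dsimp <;> omega
  subst hDD
  have hB₁₀ : B 1 0 = B' 1 0 := by
    have hB₀₁ : B 0 1 = B' 0 1 := by omega
    have hB₁₁ : B 1 1 = B' 1 1 := by omega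
    exact mul_right_cancel₀ hd₁.ne'
      (by linear_combination hBD - hBD' + D 0 0 * hB₀₁ + D 1 0 * hB₁₁)
  have hBB : B = B' := by
    ext i j; fin_cases i <;> fin_cases j <;> dsimp <;> omega
  rw [hBB]

end Counting

/-- The number of orbits of `Γ₂` acting on `S(m)` by left multiplication is at
most `m³ · σ₀(m)²`: there is a set of representatives of at most that size. -/
theorem statement16 (m : ℕ) (hm : 1 ≤ m) :
    ∃ R : Set (Matrix (Fin 2 ⊕ Fin 2) (Fin 2 ⊕ Fin 2) ℤ),
      R ⊆ Sm m ∧ R.Finite ∧ R.ncard ≤ m ^ 3 * m.divisors.card ^ 2 ∧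
      ∀ M ∈ Sm m, ∃ γ ∈ Gamma2, ∃ N ∈ R, M = γ * N := by
  have hm₀ : m ≠ 0 := Nat.one_le_iff_ne_zero.mp hm
  have hmaps : Set.MapsTo reducedParams (reducedSet m) (paramSet m) :=
    fun _ hN ↦ reducedParams_mem_paramSet hm₀ hN
  refine ⟨reducedSet m, fun _ hN ↦ hN.1,
    .of_injOn hmaps (reducedParams_injOn hm₀) (paramSet m).finite_toSet, ?_, fun M hM ↦ ?_⟩
  · calc (reducedSet m).ncard
        ≤ (paramSet m : Set _).ncard :=
          Set.ncard_le_ncard_of_injOn _ (fun _ hN ↦ hmaps hN) (reducedParams_injOn hm₀)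
            (paramSet m).finite_toSet
      _ = (paramSet m).card := Set.ncard_coe_finset _
      _ ≤ m ^ 3 * m.divisors.card ^ 2 := card_paramSet_le m
  · obtain ⟨γ, hγ, hN⟩ := exists_mem_Gamma2_mul_mem_reducedSet hm₀ hM
    obtain ⟨δ, hδ, hδγ⟩ := exists_mem_Gamma2_mul_eq_one hγ
    exact ⟨δ, hδ, γ * M, hN, by rw [← Matrix.mul_assoc, hδγ, Matrix.one_mul]⟩
end

section
/- There exists an absolute constant C such that for all real numbers α > 1 and d > 0, ∑_{t=1}^∞ t^{α−1} e^{−t d} ≤ C · d^{−α+1} · Γ(α) · ( d^{−1} + (α−1)^{−1/2} ). -/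
/-!
With `s = α - 1`, the summand is `f t = t ^ s * exp (-d t)`, which increases up to its peak
`t = s / d` and decreases afterwards. For such a unimodal function, comparing the sum with the
integral on each monotone piece and bounding the two integer points next to the peak by `f (s / d)`
gives `∑ f(t) ≤ 2 (∫₀^∞ f + f (s / d))`. Here `∫₀^∞ f = Γ(α) d^{-α}` and
`f (s / d) = d^{-s} s^s e^{-s}`; the latter is at most `e d^{-s} Γ(α) / √s` because on
`[s, s + √s]` the Gamma integrand `x^s e^{-x}` stays above `e^{-1} s^s e^{-s}`.
So `C = 2e` works.
-/

open Real Set MeasureTheory Finset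

theorem tsum_pnat_le_two_mul_integral_add_of_unimodal {f : ℝ → ℝ} {p : ℝ} (hp : 0 ≤ p)
    (hf : ∀ x, 0 ≤ x → 0 ≤ f x) (hmono : MonotoneOn f (Icc 0 p))
    (hanti : AntitoneOn f (Ici p)) (hint : IntegrableOn f (Ioi 0)) :
    ∑' n : ℕ+, f n ≤ 2 * ((∫ x in Ioi 0, f x) + f p) := by
  set L := ⌊p⌋₊
  have hLp : (L : ℝ) ≤ p := Nat.floor_le hp
  have hpL : p ≤ L + 1 := (Nat.lt_floor_add_one p).le
  have hmax : ∀ x, 0 ≤ x → f x ≤ f p := fun x hx => by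
    rcases le_total x p with hxp | hpx
    · exact hmono ⟨hx, hxp⟩ ⟨hp, le_rfl⟩ hxp
    · exact hanti (le_refl p) hpx hpx
  have hinterval (a b : ℝ) (ha : 0 ≤ a) (hab : a ≤ b) :
      ∫ x in a..b, f x ≤ ∫ x in Ioi 0, f x := by
    rw [intervalIntegral.integral_of_le hab]
    have hsub : Ioc a b ⊆ Ioi 0 := fun x hx => ha.trans_lt hx.1
    refine setIntegral_mono_set hint ?_ hsub.eventuallyLE
    filter_upwards [ae_restrict_mem measurableSet_Ioi] with x hx using hf x (le_of_lt hx)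
  have hleft : ∑ n ∈ range L, f n ≤ ∫ x in (0 : ℝ)..L, f x := by
    have h : MonotoneOn f (Icc 0 (0 + L)) :=
      hmono.mono (by simpa using Icc_subset_Icc_right hLp)
    simpa using h.sum_le_integral
  have hright (N : ℕ) :
      ∑ i ∈ range N, f ((L + 1 : ℝ) + ↑(i + 1))
        ≤ ∫ x in (L + 1 : ℝ)..L + 1 + N, f x :=
    AntitoneOn.sum_le_integral (hanti.mono fun x hx => hpL.trans hx.1)
  rw [tsum_pnat_eq_tsum_succ (f := fun n : ℕ => f n)]
  refine Real.tsum_le_of_sum_range_le (fun n => hf _ (by positivity)) fun N => ?_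
  calc ∑ i ∈ range N, f ↑(i + 1) ≤ ∑ n ∈ range (N + 1), f n := by
        rw [sum_range_succ']
        exact le_add_of_nonneg_right (hf _ (Nat.cast_nonneg 0))
    _ ≤ ∑ n ∈ range (L + 2 + N), f n :=
        sum_le_sum_of_subset_of_nonneg (range_subset_range.2 (by omega))
          fun n _ _ => hf n n.cast_nonneg
    _ = ∑ n ∈ range L, f n + f L + f (L + 1)
          + ∑ i ∈ range N, f ((L + 1 : ℝ) + ↑(i + 1)) := by
        rw [sum_range_add, sum_range_succ, sum_range_succ]
        push_cast
        ring_nf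
    _ ≤ (∫ x in Ioi 0, f x) + f p + f p + ∫ x in Ioi 0, f x := by
        gcongr
        · exact hleft.trans (hinterval _ _ le_rfl (by positivity))
        · exact hmax _ (by positivity)
        · exact hmax _ (by positivity)
        · exact (hright N).trans (hinterval _ _ (by positivity) (by simp))
    _ = 2 * ((∫ x in Ioi 0, f x) + f p) := by ring

theorem rpow_mul_exp_neg_mul_le_iff {s d x y : ℝ} (hx : 0 < x) (hy : 0 < y) :
    x ^ s * exp (-(d * x)) ≤ y ^ s * exp (-(d * y)) ↔
      s * log x - d * x ≤ s * log y - d * y := by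
  rw [rpow_def_of_pos hx, rpow_def_of_pos hy, ← exp_add, ← exp_add, exp_le_exp]
  constructor <;> intro h <;> linarith

theorem monotoneOn_rpow_mul_exp_neg_mul {s d : ℝ} (hs : 0 < s) (hd : 0 < d) :
    MonotoneOn (fun x : ℝ => x ^ s * exp (-(d * x))) (Icc 0 (s / d)) := by
  intro x ⟨hx, _⟩ y ⟨_, hy⟩ hxy
  rcases hx.eq_or_lt with rfl | hx
  · simpa [zero_rpow hs.ne'] using mul_nonneg (rpow_nonneg hxy s) (exp_pos _).le
  have hy0 : 0 < y := hx.trans_le hxy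
  have hlog : 1 - x / y ≤ log y - log x := by
    simpa [log_div hy0.ne' hx.ne'] using one_sub_inv_le_log_of_pos (div_pos hy0 hx)
  have hdy : d * y ≤ s := by rwa [le_div_iff₀ hd, mul_comm] at hy
  rw [rpow_mul_exp_neg_mul_le_iff hx hy0]
  have : d * (y - x) ≤ s * (1 - x / y) := by
    rw [one_sub_div hy0.ne', mul_div_assoc', le_div_iff₀ hy0]
    nlinarith [sub_nonneg.2 hxy]
  nlinarith

theorem antitoneOn_rpow_mul_exp_neg_mul {s d : ℝ} (hs : 0 < s) (hd : 0 < d) :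
    AntitoneOn (fun x : ℝ => x ^ s * exp (-(d * x))) (Ici (s / d)) := by
  intro x hx y _ hxy
  have hx0 : 0 < x := (div_pos hs hd).trans_le hx
  have hy0 : 0 < y := hx0.trans_le hxy
  have hlog : log y - log x ≤ y / x - 1 := by
    simpa [log_div hy0.ne' hx0.ne'] using log_le_sub_one_of_pos (div_pos hy0 hx0)
  have hdx : s ≤ d * x := by rwa [Set.mem_Ici, div_le_iff₀ hd, mul_comm] at hx
  rw [rpow_mul_exp_neg_mul_le_iff hy0 hx0]
  have : s * (y / x - 1) ≤ d * (y - x) := by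
    rw [div_sub_one hx0.ne', mul_div_assoc', div_le_iff₀ hx0]
    nlinarith [sub_nonneg.2 hxy]
  nlinarith

theorem integrableOn_rpow_mul_exp_neg_mul {s d : ℝ} (hs : -1 < s) (hd : 0 < d) :
    IntegrableOn (fun x : ℝ => x ^ s * exp (-(d * x))) (Ioi 0) := by
  simpa using integrableOn_rpow_mul_exp_neg_mul_rpow hs one_pos hd

theorem exp_neg_one_mul_le_exp_neg_mul_rpow {s x : ℝ} (hs : 0 < s) (hsx : s < x)
    (hxs : (x - s) ^ 2 ≤ s) : exp (-1) * (exp (-s) * s ^ s) ≤ exp (-x) * x ^ s := by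
  have hx : 0 < x := hs.trans hsx
  have hlog : 1 - s / x ≤ log x - log s := by
    simpa [log_div hx.ne' hs.ne'] using one_sub_inv_le_log_of_pos (div_pos hx hs)
  have : x - s - 1 ≤ s * (1 - s / x) := by
    rw [one_sub_div hx.ne', mul_div_assoc', le_div_iff₀ hx]
    nlinarith
  rw [rpow_def_of_pos hs, rpow_def_of_pos hx, ← exp_add, ← exp_add, ← exp_add, exp_le_exp]
  nlinarith

theorem rpow_self_mul_exp_neg_mul_sqrt_le_Gamma {s : ℝ} (hs : 0 < s) :
    s ^ s * exp (-s) * √s ≤ exp 1 * Gamma (s + 1) := by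
  have hint : IntegrableOn (fun x => exp (-x) * x ^ s) (Ioi 0) := by
    simpa using GammaIntegral_convergent (by linarith : 0 < s + 1)
  have hsub : Ioc s (s + √s) ⊆ Ioi 0 := fun x hx => hs.trans hx.1
  have hlower :
      √s * (exp (-1) * (exp (-s) * s ^ s)) ≤ ∫ x in Ioc s (s + √s), exp (-x) * x ^ s := by
    have := setIntegral_ge_of_const_le measurableSet_Ioc (by simp)
      (fun x hx => exp_neg_one_mul_le_exp_neg_mul_rpow hs hx.1 ?_) (hint.mono_set hsub)
    · simpa [measureReal_def, Real.volume_Ioc] using this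
    · nlinarith [sq_sqrt hs.le, sqrt_nonneg s, hx.1, hx.2]
  have hupper : ∫ x in Ioc s (s + √s), exp (-x) * x ^ s ≤ Gamma (s + 1) := by
    rw [Gamma_eq_integral (by linarith), add_sub_cancel_right]
    refine setIntegral_mono_set hint ?_ hsub.eventuallyLE
    filter_upwards [ae_restrict_mem measurableSet_Ioi] with x hx
    exact mul_nonneg (exp_pos _).le (rpow_nonneg (le_of_lt hx) _)
  calc s ^ s * exp (-s) * √s = exp 1 * (√s * (exp (-1) * (exp (-s) * s ^ s))) := by
        rw [exp_neg 1]
        field_simp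
    _ ≤ exp 1 * Gamma (s + 1) := by gcongr; exact hlower.trans hupper

theorem rpow_mul_exp_neg_mul_at_div_le_Gamma {s d : ℝ} (hs : 0 < s) (hd : 0 < d) :
    (s / d) ^ s * exp (-(d * (s / d))) ≤ exp 1 * d ^ (-s) * Gamma (s + 1) * (√s)⁻¹ := by
  have hΓ := rpow_self_mul_exp_neg_mul_sqrt_le_Gamma hs
  have hsqrt : 0 < √s := sqrt_pos.2 hs
  calc (s / d) ^ s * exp (-(d * (s / d))) = d ^ (-s) * (s ^ s * exp (-s)) := by
        rw [div_rpow hs.le hd.le, mul_div_cancel₀ s hd.ne', rpow_neg hd.le]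
        ring
    _ ≤ d ^ (-s) * (exp 1 * Gamma (s + 1) * (√s)⁻¹) :=
        mul_le_mul_of_nonneg_left ((le_mul_inv_iff₀ hsqrt).2 hΓ) (by positivity)
    _ = _ := by ring

theorem statement17 :
    ∃ C : ℝ, 0 < C ∧ ∀ α d : ℝ, 1 < α → 0 < d →
      (∑' t : ℕ+, (t : ℝ) ^ (α - 1) * Real.exp (-(t : ℝ) * d))
        ≤ C * d ^ (-α + 1) * Real.Gamma α * (d⁻¹ + (α - 1) ^ (-(1 : ℝ) / 2)) := by
  refine ⟨2 * exp 1, by positivity, fun α d hα hd => ?_⟩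
  obtain ⟨s, hs, rfl⟩ : ∃ s, 0 < s ∧ α = s + 1 := ⟨α - 1, by linarith, by ring⟩
  set f := fun x : ℝ => x ^ s * exp (-(d * x))
  have hsum : ∑' t : ℕ+, (t : ℝ) ^ (s + 1 - 1) * exp (-(t : ℝ) * d)
      ≤ 2 * ((∫ x in Ioi 0, f x) + f (s / d)) := by
    have hterm (t : ℝ) : t ^ (s + 1 - 1) * exp (-t * d) = f t := by
      rw [add_sub_cancel_right, neg_mul, mul_comm t d]
    simp only [hterm]
    exact tsum_pnat_le_two_mul_integral_add_of_unimodal (div_pos hs hd).le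
      (fun x hx => by positivity) (monotoneOn_rpow_mul_exp_neg_mul hs hd)
      (antitoneOn_rpow_mul_exp_neg_mul hs hd) (integrableOn_rpow_mul_exp_neg_mul (by linarith) hd)
  have hintegral : ∫ x in Ioi 0, f x = d ^ (-s) * d⁻¹ * Gamma (s + 1) := by
    have := integral_rpow_mul_exp_neg_mul_Ioi (a := s + 1) (by linarith) hd
    rw [add_sub_cancel_right] at this
    rw [this, one_div, inv_rpow hd.le, rpow_add_one hd.ne', rpow_neg hd.le, mul_inv]
  have hpeak : f (s / d) ≤ exp 1 * d ^ (-s) * Gamma (s + 1) * (√s)⁻¹ :=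
    rpow_mul_exp_neg_mul_at_div_le_Gamma hs hd
  calc _ ≤ 2 * ((∫ x in Ioi 0, f x) + f (s / d)) := hsum
    _ ≤ 2 * (exp 1 * d ^ (-s) * d⁻¹ * Gamma (s + 1)
          + exp 1 * d ^ (-s) * Gamma (s + 1) * (√s)⁻¹) := by
      rw [hintegral]
      gcongr
      exact le_mul_of_one_le_left (by positivity) (one_le_exp zero_le_one)
    _ = _ := by
      rw [show -(s + 1) + 1 = -s by ring, add_sub_cancel_right, neg_div, rpow_neg hs.le,
        ← sqrt_eq_rpow]
      ring
end

section
/- There exist absolute constants C and k₀ such that the following holds for every integer k ≥ k₀. Let I be a finite index set and for each f ∈ I let a_f : {1, 2, 3, …} → ℂ be a function such that ∑_{f∈I} |a_f(n)|² ≤ (4πn)^k / Γ(k−1) for every positive integer n. Then for every complex number z = x + iy with y > 0, each series F_f(z) := ∑_{n≥1} a_f(n) e^{2πinz} converges absolutely, and ∑_{f∈I} y^k |F_f(z)|² ≤ C · k^{5/2} · ( y^{−1} + k^{−1/2} )². -/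
/-!
Put the coefficients into vectors `v_m = (a_f(m))_f` of `ℓ²(I)`. Then `(F_f(z))_f = ∑ v_m e^{2πimz}`,
and the triangle inequality in `ℓ²(I)` bounds its norm by
`∑ ‖v_m‖ e^{-2πmy} ≤ (2/y)^{k/2} Γ(k-1)^{-1/2} ∑ φ(2πym)`, where `φ(t) = t^{k/2} e^{-t}`.
As `φ` increases up to `k/2` and decreases afterwards, comparison with `∫ φ = Γ(k/2+1)` gives
`∑ φ(2πym) ≤ Γ(k/2+1)/(2πy) + 2 φ(k/2)`. Finally Legendre's duplication formula together with
the log-convexity of `Γ`, and Stirling's lower bound for `k!`, compare `2^{k/2} Γ(k/2+1)` and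
`2^{k/2} φ(k/2) = (k/e)^{k/2}` with `Γ(k-1)^{1/2} k^{5/4}`.
-/

open scoped Nat
open Real MeasureTheory Finset

namespace Real

lemma rpow_mul_exp_neg_monotoneOn {A : ℝ} (hA : 0 < A) :
    MonotoneOn (fun t : ℝ => t ^ A * exp (-t)) (Set.Icc 0 A) := by
  rintro s ⟨hs0, -⟩ t ⟨-, htA⟩ hst
  rcases hs0.eq_or_lt with rfl | hs
  · simp only [zero_rpow hA.ne', zero_mul]
    exact mul_nonneg (rpow_nonneg (hs0.trans hst) A) (exp_pos _).le
  have ht : 0 < t := hs.trans_le hst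
  simp only [rpow_def_of_pos hs, rpow_def_of_pos ht, ← exp_add]
  refine exp_le_exp.2 ?_
  -- `log (t / s) ≥ 1 - s / t` and `A ≥ t` give `A log (t / s) ≥ t - s`
  have hlog : 1 - s / t ≤ log t - log s := by
    simpa [log_div ht.ne' hs.ne', inv_div] using one_sub_inv_le_log_of_pos (div_pos ht hs)
  have h1 : 0 ≤ 1 - s / t := by rw [sub_nonneg, div_le_one ht]; exact hst
  have h2 : t * (1 - s / t) = t - s := by field_simp
  nlinarith [mul_le_mul_of_nonneg_right htA h1]

lemma rpow_mul_exp_neg_antitoneOn {A : ℝ} (hA : 0 < A) :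
    AntitoneOn (fun t : ℝ => t ^ A * exp (-t)) (Set.Ici A) := by
  rintro s hs t ht hst
  have hs0 : 0 < s := hA.trans_le hs
  have ht0 : 0 < t := hs0.trans_le hst
  simp only [rpow_def_of_pos hs0, rpow_def_of_pos ht0, ← exp_add]
  refine exp_le_exp.2 ?_
  have hlog : log t - log s ≤ t / s - 1 := by
    simpa [log_div ht0.ne' hs0.ne'] using log_le_sub_one_of_pos (div_pos ht0 hs0)
  have h1 : 0 ≤ t / s - 1 := by rw [sub_nonneg, one_le_div hs0]; exact hst
  have h2 : s * (t / s - 1) = t - s := by field_simp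
  nlinarith [mul_le_mul_of_nonneg_right (show A ≤ s from hs) h1]

end Real

lemma sum_range_le_integral_add_of_unimodal {f : ℝ → ℝ} {c : ℝ} (hc : 0 ≤ c)
    (hf : ∀ x, 0 ≤ x → 0 ≤ f x) (hmono : MonotoneOn f (Set.Icc 0 c))
    (hanti : AntitoneOn f (Set.Ici c)) (hint : IntegrableOn f (Set.Ioi 0)) (N : ℕ) :
    ∑ n ∈ range N, f (n + 1) ≤ (∫ x in Set.Ioi 0, f x) + 2 * f c := by
  set m := ⌊c⌋₊
  set M := max N (m + 1)
  have hm : (m : ℝ) ≤ c := Nat.floor_le hc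
  have hm' : c ≤ m + 1 := (Nat.lt_floor_add_one c).le
  have hII : ∀ a b : ℝ, 0 ≤ a → 0 ≤ b → IntervalIntegrable f volume a b := fun a b ha hb =>
    intervalIntegrable_iff.2 (hint.mono_set fun x hx => (le_min ha hb).trans_lt hx.1)
  have increasing : ∑ n ∈ range m, f (n + 1) ≤ (∫ x in (0 : ℝ)..m, f x) + f c := by
    have hsum := (hmono.mono (Set.Icc_subset_Icc_right (by simpa using hm))).sum_le_integral
    simp only [zero_add] at hsum
    have hsucc := sum_range_succ' (fun n : ℕ => f n) m
    rw [sum_range_succ] at hsucc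
    push_cast at hsucc
    linarith [hf 0 le_rfl, hmono ⟨m.cast_nonneg, hm⟩ ⟨hc, le_rfl⟩ hm]
  have decreasing : ∑ n ∈ Ico (m + 1) M, f (n + 1) ≤ ∫ x in ((m + 1 : ℕ) : ℝ)..M, f x := by
    have := AntitoneOn.sum_le_integral_Ico (le_max_right N (m + 1))
      (hanti.mono fun x hx => by push_cast at hx; exact hm'.trans hx.1)
    simpa [M] using this
  have hmM : ((m + 1 : ℕ) : ℝ) ≤ M := by exact_mod_cast le_max_right N (m + 1)
  have tail : (∫ x in ((m + 1 : ℕ) : ℝ)..M, f x) ≤ ∫ x in (m : ℝ)..M, f x :=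
    intervalIntegral.integral_mono_interval (by push_cast; linarith) hmM le_rfl
      (ae_restrict_of_forall_mem measurableSet_Ioc fun x hx =>
        hf x (m.cast_nonneg.trans_lt hx.1).le)
      (hII _ _ m.cast_nonneg M.cast_nonneg)
  have whole : (∫ x in (0 : ℝ)..M, f x) ≤ ∫ x in Set.Ioi 0, f x := by
    rw [intervalIntegral.integral_of_le M.cast_nonneg]
    exact setIntegral_mono_set hint
      (ae_restrict_of_forall_mem measurableSet_Ioi fun x hx => hf x (le_of_lt hx))
      Set.Ioc_subset_Ioi_self.eventuallyLE
  calc ∑ n ∈ range N, f (n + 1) ≤ ∑ n ∈ range M, f (n + 1) :=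
        sum_le_sum_of_subset_of_nonneg (range_subset_range.2 (le_max_left _ _))
          fun n _ _ => hf _ (by positivity)
    _ = ∑ n ∈ range m, f (n + 1) + f (m + 1) + ∑ n ∈ Ico (m + 1) M, f (n + 1) := by
        rw [← sum_range_add_sum_Ico _ (by omega : m ≤ M), sum_eq_sum_Ico_succ_bot (by omega)]
        ring
    _ ≤ (∫ x in (0 : ℝ)..m, f x) + f c + f c + ∫ x in (m : ℝ)..M, f x := by
        gcongr
        · exact hanti Set.self_mem_Ici hm' hm'
        · exact decreasing.trans tail
    _ = (∫ x in (0 : ℝ)..M, f x) + 2 * f c := by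
        rw [← intervalIntegral.integral_add_adjacent_intervals (hII _ _ le_rfl m.cast_nonneg)
          (hII _ _ m.cast_nonneg M.cast_nonneg)]
        ring
    _ ≤ _ := by gcongr

lemma summable_pnat_and_tsum_le_of_unimodal {f : ℝ → ℝ} {c : ℝ} (hc : 0 ≤ c)
    (hf : ∀ x, 0 ≤ x → 0 ≤ f x) (hmono : MonotoneOn f (Set.Icc 0 c))
    (hanti : AntitoneOn f (Set.Ici c)) (hint : IntegrableOn f (Set.Ioi 0)) :
    Summable (fun n : ℕ+ => f n) ∧ ∑' n : ℕ+, f n ≤ (∫ x in Set.Ioi 0, f x) + 2 * f c := by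
  have hnn : ∀ n : ℕ, 0 ≤ f ((n + 1 : ℕ) : ℝ) := fun n => hf _ n.succ.cast_nonneg
  have hsum : ∀ N, ∑ n ∈ range N, f ((n + 1 : ℕ) : ℝ) ≤ (∫ x in Set.Ioi 0, f x) + 2 * f c := by
    intro N
    push_cast
    exact sum_range_le_integral_add_of_unimodal hc hf hmono hanti hint N
  let g : ℕ → ℝ := fun n => f n
  refine ⟨summable_pnat_iff_summable_succ (f := g) |>.2
    (summable_of_sum_range_le (f := fun n => g (n + 1)) hnn hsum), ?_⟩
  rw [tsum_pnat_eq_tsum_succ (f := g)]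
  exact Real.tsum_le_of_sum_range_le (f := fun n => g (n + 1)) hnn hsum

lemma summable_pnat_and_tsum_rpow_mul_exp_neg_le {A r : ℝ} (hA : 0 < A) (hr : 0 < r) :
    Summable (fun n : ℕ+ => (r * n) ^ A * exp (-(r * n))) ∧
      ∑' n : ℕ+, (r * n) ^ A * exp (-(r * n)) ≤ Gamma (A + 1) / r + 2 * (A ^ A * exp (-A)) := by
  set g : ℝ → ℝ := fun t => t ^ A * exp (-t)
  have hgint : IntegrableOn g (Set.Ioi 0) := by
    refine (Real.GammaIntegral_convergent (by linarith : 0 < A + 1)).congr_fun (fun t _ => ?_)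
      measurableSet_Ioi
    simp [g, mul_comm]
  have hmono : MonotoneOn (fun t => g (r * t)) (Set.Icc 0 (A / r)) :=
    (rpow_mul_exp_neg_monotoneOn hA).comp (fun s _ t _ hst => by gcongr) fun t ht =>
      ⟨by have := ht.1; positivity, by rw [← mul_div_cancel₀ A hr.ne']; gcongr; exact ht.2⟩
  have hanti : AntitoneOn (fun t => g (r * t)) (Set.Ici (A / r)) :=
    (rpow_mul_exp_neg_antitoneOn hA).comp_MonotoneOn (fun s _ t _ hst => by gcongr) fun t ht =>
      by rw [Set.mem_Ici, ← mul_div_cancel₀ A hr.ne']; gcongr; exact ht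
  have hint : ∫ t in Set.Ioi 0, g (r * t) = Gamma (A + 1) / r := by
    rw [integral_comp_mul_left_Ioi g 0 hr, mul_zero, Gamma_eq_integral (by linarith)]
    simp [g, mul_comm, div_eq_inv_mul]
  have hpeak : g (r * (A / r)) = A ^ A * exp (-A) := by simp [g, mul_div_cancel₀ A hr.ne']
  have key := summable_pnat_and_tsum_le_of_unimodal (f := fun t => g (r * t)) (by positivity)
    (fun t ht => mul_nonneg (rpow_nonneg (by positivity) _) (exp_pos _).le) hmono hanti
    ((integrableOn_Ioi_comp_mul_left_iff g 0 hr).2 (by rwa [mul_zero]))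
  rwa [hint, hpeak] at key

lemma summable_and_sum_norm_tsum_sq_le {ι I 𝕜 : Type*} [Fintype I] [RCLike 𝕜] (u : I → ι → 𝕜)
    {B : ι → ℝ} (hB : Summable B) (hu : ∀ i, √(∑ j, ‖u j i‖ ^ 2) ≤ B i) :
    (∀ j, Summable fun i => ‖u j i‖) ∧ ∑ j, ‖∑' i, u j i‖ ^ 2 ≤ (∑' i, B i) ^ 2 := by
  let g : ι → EuclideanSpace 𝕜 I := fun i => WithLp.toLp 2 (fun j => u j i)
  have hg : ∀ i, ‖g i‖ ≤ B i := fun i => by rw [EuclideanSpace.norm_eq]; exact hu i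
  have hgs : Summable fun i => ‖g i‖ := hB.of_nonneg_of_le (fun _ => norm_nonneg _) hg
  refine ⟨fun j => hgs.of_nonneg_of_le (fun _ => norm_nonneg _)
    (fun i => PiLp.norm_apply_le (g i) j), ?_⟩
  have htsum : ∀ j, ∑' i, u j i = (∑' i, g i) j := fun j =>
    ((EuclideanSpace.proj j : EuclideanSpace 𝕜 I →L[𝕜] 𝕜).map_tsum hgs.of_norm).symm
  calc ∑ j, ‖∑' i, u j i‖ ^ 2 = ‖∑' i, g i‖ ^ 2 := by simp_rw [htsum, EuclideanSpace.norm_sq_eq]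
    _ ≤ (∑' i, B i) ^ 2 := by
      gcongr
      exact (norm_tsum_le_tsum_norm hgs).trans (hgs.tsum_le_tsum hg hB)

namespace Real

lemma rpow_div_two_sq {a : ℝ} (ha : 0 ≤ a) (k : ℕ) : (a ^ ((k : ℝ) / 2)) ^ 2 = a ^ k := by
  rw [← rpow_natCast, ← rpow_mul ha, ← rpow_natCast]
  norm_num

lemma Gamma_add_one_le_sqrt_mul_Gamma_add_half {x : ℝ} (hx : 0 < x + 1 / 2) :
    Gamma (x + 1) ≤ √(x + 1 / 2) * Gamma (x + 1 / 2) := by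
  have h := Gamma_mul_add_mul_le_rpow_Gamma_mul_rpow_Gamma hx (by linarith : 0 < x + 1 / 2 + 1)
    (by norm_num : (0 : ℝ) < 1 / 2) (by norm_num : (0 : ℝ) < 1 / 2) (by norm_num)
  have hG := Gamma_pos_of_pos hx
  rw [Gamma_add_one hx.ne', ← sqrt_eq_rpow, ← sqrt_eq_rpow, ← sqrt_mul hG.le,
    show Gamma (x + 1 / 2) * ((x + 1 / 2) * Gamma (x + 1 / 2))
      = (x + 1 / 2) * Gamma (x + 1 / 2) ^ 2 by ring, sqrt_mul hx.le, sqrt_sq hG.le] at h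
  convert h using 2
  ring

lemma sq_two_rpow_mul_Gamma_add_one_le {x : ℝ} (hx : 0 < x + 1 / 2) :
    (2 ^ x * Gamma (x + 1)) ^ 2 ≤ √(π * (x + 1 / 2)) * Gamma (2 * x + 1) := by
  have hdup := Gamma_mul_Gamma_add_half (x + 1 / 2)
  rw [show x + 1 / 2 + 1 / 2 = x + 1 by ring, show 2 * (x + 1 / 2) = 2 * x + 1 by ring,
    show 1 - (2 * x + 1) = -(2 * x) by ring] at hdup
  have h2 : (2 : ℝ) ^ x * 2 ^ x * 2 ^ (-(2 * x)) = 1 := by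
    rw [← rpow_add two_pos, ← rpow_add two_pos, show x + x + -(2 * x) = 0 by ring, rpow_zero]
  calc (2 ^ x * Gamma (x + 1)) ^ 2
      ≤ 2 ^ x * 2 ^ x * (√(x + 1 / 2) * Gamma (x + 1 / 2) * Gamma (x + 1)) := by
        rw [show (2 ^ x * Gamma (x + 1)) ^ 2 = 2 ^ x * 2 ^ x * (Gamma (x + 1) * Gamma (x + 1)) by
          ring]
        have := (Gamma_pos_of_pos (by linarith : 0 < x + 1)).le
        gcongr
        exact Gamma_add_one_le_sqrt_mul_Gamma_add_half hx
    _ = √(π * (x + 1 / 2)) * Gamma (2 * x + 1) * (2 ^ x * 2 ^ x * 2 ^ (-(2 * x))) := by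
        rw [mul_assoc √_, hdup, sqrt_mul pi_pos.le]; ring
    _ = _ := by rw [h2, mul_one]

lemma factorial_le_sq_mul_Gamma_sub_one {k : ℕ} (hk : 2 ≤ k) :
    (k ! : ℝ) ≤ k ^ 2 * Gamma (k - 1) := by
  obtain ⟨n, rfl⟩ := Nat.exists_eq_add_of_le' hk
  rw [show ((n + 2 : ℕ) : ℝ) - 1 = n + 1 by push_cast; ring, Gamma_nat_eq_factorial,
    Nat.factorial_succ, Nat.factorial_succ]
  push_cast
  have hF : (0 : ℝ) ≤ n ! := by positivity
  nlinarith [mul_nonneg (Nat.cast_nonneg (α := ℝ) n) hF]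

lemma sq_two_rpow_mul_Gamma_half_add_one_le {k : ℕ} (hk : 2 ≤ k) :
    (2 ^ ((k : ℝ) / 2) * Gamma ((k : ℝ) / 2 + 1)) ^ 2 ≤ 2 * √k ^ 5 * Gamma (k - 1) := by
  have hk' : (2 : ℝ) ≤ k := by exact_mod_cast hk
  have hpi : √(π * ((k : ℝ) / 2 + 1 / 2)) ≤ 2 * √k := by
    calc √(π * ((k : ℝ) / 2 + 1 / 2)) ≤ √(2 ^ 2 * k) := sqrt_le_sqrt (by nlinarith [pi_lt_four])
      _ = 2 * √k := by rw [sqrt_mul (by norm_num), sqrt_sq (by norm_num)]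
  calc _ ≤ √(π * ((k : ℝ) / 2 + 1 / 2)) * k ! := by
        convert sq_two_rpow_mul_Gamma_add_one_le (x := (k : ℝ) / 2) (by positivity) using 2
        rw [show 2 * ((k : ℝ) / 2) + 1 = k + 1 by ring, Gamma_nat_eq_factorial]
    _ ≤ (2 * √k) * (k ^ 2 * Gamma (k - 1)) := by
        gcongr
        exact factorial_le_sq_mul_Gamma_sub_one hk
    _ = 2 * √k ^ 5 * Gamma (k - 1) := by
        rw [show √(k : ℝ) ^ 5 = √k * (√k ^ 2) ^ 2 by ring, sq_sqrt (Nat.cast_nonneg _)]; ring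

lemma sq_div_exp_one_rpow_half_le {k : ℕ} (hk : 2 ≤ k) :
    (((k : ℝ) / exp 1) ^ ((k : ℝ) / 2)) ^ 2 ≤ √k ^ 3 * Gamma (k - 1) := by
  have hs : 0 < √(k : ℝ) := sqrt_pos.2 (by positivity)
  have hstirling := Stirling.le_factorial_stirling k
  have h2pi : √(k : ℝ) ≤ √(2 * π * k) := by
    gcongr; nlinarith [pi_gt_three, (Nat.cast_nonneg k : (0 : ℝ) ≤ k)]
  rw [rpow_div_two_sq (by positivity)]
  refine le_of_mul_le_mul_left ?_ hs
  calc √(k : ℝ) * ((k : ℝ) / exp 1) ^ k ≤ k ! := by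
        refine le_trans ?_ hstirling; gcongr
    _ ≤ k ^ 2 * Gamma (k - 1) := factorial_le_sq_mul_Gamma_sub_one hk
    _ = √k * (√k ^ 3 * Gamma (k - 1)) := by
        rw [show √(k : ℝ) * (√k ^ 3 * Gamma (k - 1)) = (√k ^ 2) ^ 2 * Gamma (k - 1) by ring,
          sq_sqrt (Nat.cast_nonneg _)]

lemma two_pow_mul_sq_Gamma_half_div_add_le {k : ℕ} (hk : 2 ≤ k) {y : ℝ} (hy : 0 < y) :
    2 ^ k * (Gamma ((k : ℝ) / 2 + 1) / (2 * π * y)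
        + 2 * (((k : ℝ) / 2) ^ ((k : ℝ) / 2) * exp (-((k : ℝ) / 2)))) ^ 2
      ≤ 4 * (k : ℝ) ^ ((5 : ℝ) / 2) * Gamma (k - 1) * (y⁻¹ + (k : ℝ) ^ (-(1 : ℝ) / 2)) ^ 2 := by
  set A : ℝ := (k : ℝ) / 2
  have hk0 : (0 : ℝ) < k := by positivity
  have hs : 0 < √(k : ℝ) := sqrt_pos.2 hk0
  have hk2 : (2 : ℝ) ≤ k := by exact_mod_cast hk
  have hG : 0 < Gamma (k - 1) := Gamma_pos_of_pos (by linarith)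
  set U := √(√k ^ 3 * Gamma (k - 1))
  have hU : U ^ 2 = √k ^ 3 * Gamma (k - 1) := sq_sqrt (by positivity)
  have hu : 2 ^ A * Gamma (A + 1) ≤ √2 * √k * U := by
    refine (pow_le_pow_iff_left₀ (by positivity) (by positivity) two_ne_zero).1 ?_
    refine (sq_two_rpow_mul_Gamma_half_add_one_le hk).trans_eq ?_
    rw [mul_pow, mul_pow, hU, sq_sqrt zero_le_two]
    ring
  have hpeak : 2 ^ A * (A ^ A * exp (-A)) = (k / exp 1) ^ A := by
    rw [← mul_assoc, ← mul_rpow zero_le_two (by positivity), show 2 * A = k by ring,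
      div_rpow hk0.le (exp_pos 1).le, exp_one_rpow, exp_neg, div_eq_mul_inv]
  have hv : 2 ^ A * (A ^ A * exp (-A)) ≤ U := by
    rw [hpeak]
    exact le_sqrt_of_sq_le (sq_div_exp_one_rpow_half_le hk)
  have h52 : (k : ℝ) ^ ((5 : ℝ) / 2) = √k ^ 5 := by
    rw [sqrt_eq_rpow, ← rpow_natCast, ← rpow_mul hk0.le]; norm_num
  have h12 : (k : ℝ) ^ (-(1 : ℝ) / 2) = (√k)⁻¹ := by
    rw [sqrt_eq_rpow, ← rpow_neg hk0.le]; norm_num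
  have hsqrt2 : √2 / (2 * π) ≤ 1 := by
    rw [div_le_one (by positivity)]
    nlinarith [sqrt_le_sqrt (show (2 : ℝ) ≤ 2 ^ 2 by norm_num),
      sqrt_sq (show (0 : ℝ) ≤ 2 by norm_num), pi_gt_three]
  rw [← rpow_div_two_sq zero_le_two k, h52, h12]
  calc (2 ^ A) ^ 2 * (Gamma (A + 1) / (2 * π * y) + 2 * (A ^ A * exp (-A))) ^ 2
      = (2 ^ A * Gamma (A + 1) / (2 * π * y) + 2 * (2 ^ A * (A ^ A * exp (-A)))) ^ 2 := by ring
    _ ≤ (√2 * √k * U / (2 * π * y) + 2 * U) ^ 2 := by gcongr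
    _ ≤ (2 * √k * U * (y⁻¹ + (√k)⁻¹)) ^ 2 := by
        have hfirst : √2 * √k * U / (2 * π * y) ≤ √k * U * y⁻¹ := by
          rw [show √2 * √k * U / (2 * π * y) = √2 / (2 * π) * (√k * U * y⁻¹) by
            field_simp]
          exact mul_le_of_le_one_left (by positivity) hsqrt2
        have hsplit : 2 * √k * U * (y⁻¹ + (√k)⁻¹) = 2 * (√k * U * y⁻¹) + 2 * U := by
          field_simp
        have : 0 ≤ √k * U * y⁻¹ := by positivity
        gcongr
        linarith
    _ = 4 * √k ^ 5 * Gamma (k - 1) * (y⁻¹ + (√k)⁻¹) ^ 2 := by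
        rw [mul_pow, mul_pow, mul_pow, hU]; ring

end Real

lemma sqrt_sum_norm_mul_sq_le {I : Type*} [Fintype I] {k : ℕ} {y n G : ℝ} (hy : 0 < y)
    (hn : 0 ≤ n) (hG : 0 ≤ G) {b : I → ℂ} (hb : ∑ j, ‖b j‖ ^ 2 ≤ (4 * π * n) ^ k / G) {w : ℂ}
    (hw : ‖w‖ = exp (-(2 * π * y * n))) :
    √(∑ j, ‖b j * w‖ ^ 2) ≤ (2 / y) ^ ((k : ℝ) / 2) / √G *
      ((2 * π * y * n) ^ ((k : ℝ) / 2) * exp (-(2 * π * y * n))) := by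
  have hpow : √((4 * π * n) ^ k) = (2 / y) ^ ((k : ℝ) / 2) * (2 * π * y * n) ^ ((k : ℝ) / 2) := by
    rw [← mul_rpow (by positivity) (by positivity), sqrt_eq_rpow, ← rpow_natCast,
      ← rpow_mul (by positivity),
      show 2 / y * (2 * π * y * n) = 4 * π * n by field_simp; ring]
    ring_nf
  simp_rw [norm_mul, mul_pow, ← sum_mul, hw]
  rw [sqrt_mul (sum_nonneg fun j _ => by positivity), sqrt_sq (exp_pos _).le]
  calc √(∑ j, ‖b j‖ ^ 2) * exp (-(2 * π * y * n))
      ≤ √((4 * π * n) ^ k / G) * exp (-(2 * π * y * n)) := by gcongr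
    _ = _ := by rw [sqrt_div' _ hG, hpow]; ring

lemma norm_cexp_two_pi_I_mul_natCast (n : ℕ) (z : ℂ) :
    ‖Complex.exp (2 * (π : ℂ) * Complex.I * n * z)‖ = exp (-(2 * π * z.im * n)) := by
  rw [Complex.norm_exp]
  congr 1
  simp [Complex.mul_re, mul_comm, mul_left_comm]

theorem statement18 :
    ∃ C : ℝ, 0 < C ∧ ∃ k₀ : ℕ, ∀ k : ℕ, k₀ ≤ k →
      ∀ (I : Type) [Fintype I], ∀ a : I → ℕ+ → ℂ,
        (∀ m : ℕ+, (∑ f : I, ‖a f m‖ ^ 2) ≤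
            (4 * π * (m : ℝ)) ^ k / Real.Gamma ((k : ℝ) - 1)) →
        ∀ z : ℂ, 0 < z.im →
          (∀ f : I, Summable (fun m : ℕ+ =>
            ‖a f m * Complex.exp (2 * (π : ℂ) * Complex.I * (m : ℂ) * z)‖)) ∧
          (∑ f : I, z.im ^ k *
              ‖∑' m : ℕ+, a f m * Complex.exp (2 * (π : ℂ) * Complex.I * (m : ℂ) * z)‖ ^ 2)
            ≤ C * (k : ℝ) ^ ((5 : ℝ) / 2) * (z.im⁻¹ + (k : ℝ) ^ (-(1 : ℝ) / 2)) ^ 2 := by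
  refine ⟨4, by norm_num, 2, fun k hk I _ a ha z hz => ?_⟩
  set y := z.im
  set c := (2 / y) ^ ((k : ℝ) / 2) / √(Gamma (k - 1))
  set D := Gamma ((k : ℝ) / 2 + 1) / (2 * π * y)
    + 2 * (((k : ℝ) / 2) ^ ((k : ℝ) / 2) * exp (-((k : ℝ) / 2)))
  have hG : 0 < Gamma (k - 1) :=
    Gamma_pos_of_pos (by linarith [(Nat.ofNat_le_cast.2 hk : (2 : ℝ) ≤ k)])
  obtain ⟨hφ, hφ_le⟩ := summable_pnat_and_tsum_rpow_mul_exp_neg_le (A := (k : ℝ) / 2)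
    (by positivity) (by positivity : 0 < 2 * π * y)
  obtain ⟨hsum, hsq⟩ := summable_and_sum_norm_tsum_sq_le
    (fun f m => a f m * Complex.exp (2 * (π : ℂ) * Complex.I * (m : ℂ) * z)) (hφ.mul_left c)
    fun m => sqrt_sum_norm_mul_sq_le hz (by positivity) hG.le (ha m)
      (norm_cexp_two_pi_I_mul_natCast m z)
  refine ⟨hsum, ?_⟩
  have hc : y ^ k * c ^ 2 = 2 ^ k / Gamma (k - 1) := by
    rw [div_pow, rpow_div_two_sq (by positivity), sq_sqrt hG.le, ← mul_div_assoc, ← mul_pow,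
      mul_div_cancel₀ _ hz.ne']
  rw [← mul_sum]
  calc _ ≤ y ^ k * (c * D) ^ 2 := by
        rw [tsum_mul_left] at hsq
        gcongr
        exact hsq.trans (by gcongr)
    _ = 2 ^ k * D ^ 2 / Gamma (k - 1) := by rw [mul_pow, ← mul_assoc, hc]; ring
    _ ≤ 4 * (k : ℝ) ^ ((5 : ℝ) / 2) * (y⁻¹ + (k : ℝ) ^ (-(1 : ℝ) / 2)) ^ 2 := by
        rw [div_le_iff₀ hG]
        linarith [two_pow_mul_sq_Gamma_half_div_add_le hk hz]
end

section
/- Let ε ∈ (0, 1/2). There exist constants C = C(ε) and k₀ = k₀(ε) such that for every integer k ≥ k₀ and every point z = x + iy of the complex upper half-plane with |x| ≤ 1/2, y ≥ √3/2 and y ≤ k^{1/2}, one has #{ γ ∈ SL₂(ℤ) : |γ·z − z| ≤ (k^{ε}/k)^{1/2} · y } ≤ C · k^{1/2}. -/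
open scoped MatrixGroups UpperHalfPlane Real

open UpperHalfPlane

/-!
If `γ` moves `z` by at most `y/2`, then `Im (γ z) = y / |cz + d|² ≥ y/2`, so `|cz + d|² ≤ 2`;
for `z` in the fundamental strip this bounds `c` and `d` by constants, and `az + b = γz · (cz + d)`
then bounds `a` by a constant and `b` by `O(y)`. So all such `γ` lie in a box of `O(y)` integer
matrices, and `y ≤ k^{1/2}`. The radius `(k^ε/k)^{1/2}` is at most `1/2` once `k ≥ 16`,
because `ε < 1/2`.
-/

lemma Int.natAbs_le_floor_of_abs_le {m : ℤ} {r : ℝ} (h : |(m : ℝ)| ≤ r) : m.natAbs ≤ ⌊r⌋₊ :=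
  Nat.le_floor (by rwa [Nat.cast_natAbs, Int.cast_abs])

namespace Matrix.SpecialLinearGroup

variable {n : Type*} [Fintype n] [DecidableEq n]

lemma mapsTo_Icc_setOf_abs_le (R : n → n → ℝ) :
    Set.MapsTo (β := n → n → ℤ) (fun γ : Matrix.SpecialLinearGroup n ℤ => γ.1)
      {γ | ∀ i j, |(γ i j : ℝ)| ≤ R i j}
      (Finset.Icc (fun i j => -(⌊R i j⌋₊ : ℤ)) (fun i j => ⌊R i j⌋₊)) := by
  intro γ hγ
  rw [Finset.coe_Icc]
  refine ⟨fun i j => ?_, fun i j => ?_⟩ <;> have := Int.natAbs_le_floor_of_abs_le (hγ i j) <;>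
    dsimp only <;> omega

lemma finite_setOf_abs_le (R : n → n → ℝ) :
    {γ : Matrix.SpecialLinearGroup n ℤ | ∀ i j, |(γ i j : ℝ)| ≤ R i j}.Finite :=
  Set.Finite.of_injOn (mapsTo_Icc_setOf_abs_le R) (fun _ _ _ _ h => Subtype.ext h)
    (Finset.finite_toSet _)

lemma ncard_setOf_abs_le_le (R : n → n → ℝ) :
    {γ : Matrix.SpecialLinearGroup n ℤ | ∀ i j, |(γ i j : ℝ)| ≤ R i j}.ncard ≤
      ∏ i, ∏ j, (2 * ⌊R i j⌋₊ + 1) := by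
  refine (Set.ncard_le_ncard_of_injOn _ (mapsTo_Icc_setOf_abs_le R)
    (fun _ _ _ _ h => Subtype.ext h) (Finset.finite_toSet _)).trans ?_
  rw [Set.ncard_coe_finset, Pi.card_Icc]
  refine Finset.prod_le_prod' fun i _ => ?_
  rw [Pi.card_Icc]
  refine Finset.prod_le_prod' fun j _ => ?_
  rw [Int.card_Icc]
  omega

end Matrix.SpecialLinearGroup

lemma three_quarters_le_sqrt_three_div_two : (3 / 4 : ℝ) ≤ √3 / 2 := by
  have : (3 / 2 : ℝ) ≤ √3 := Real.le_sqrt_of_sq_le (by norm_num)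
  linarith

namespace ModularGroup

variable {γ : SL(2, ℤ)} {z : ℍ}

lemma denom_eq_intCast : denom γ z = (γ 1 0 : ℂ) * z + γ 1 1 := by
  simp [denom_apply]

lemma num_eq_smul_mul_denom : (γ 0 0 : ℂ) * z + γ 0 1 = (γ • z : ℍ) * denom γ z := by
  have hD := denom_ne_zero γ z
  rw [denom_eq_intCast] at hD
  simp only [coe_specialLinearGroup_apply, algebraMap_int_eq, eq_intCast, Complex.ofReal_intCast,
    denom_eq_intCast, div_mul_cancel₀ _ hD]

lemma normSq_denom_le_two (h : ‖((γ • z : ℍ) : ℂ) - z‖ ≤ z.im / 2) :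
    Complex.normSq (denom γ z) ≤ 2 := by
  have him : z.im / 2 ≤ (γ • z).im := by
    have := (abs_le.mp ((Complex.abs_im_le_norm _).trans h)).1
    simp only [Complex.sub_im, coe_im] at this
    linarith
  rw [im_smul_eq_div_normSq, le_div_iff₀ (normSq_denom_pos _ z.im_ne_zero)] at him
  nlinarith [z.im_pos]

lemma abs_lower_row_le (hx : |z.re| ≤ 1 / 2) (hy : √3 / 2 ≤ z.im)
    (hN : Complex.normSq (denom γ z) ≤ 2) : |(γ 1 0 : ℝ)| ≤ 1 ∧ |(γ 1 1 : ℝ)| ≤ 2 := by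
  have hy' := three_quarters_le_sqrt_three_div_two.trans hy
  rw [denom_eq_intCast, Complex.normSq_apply] at hN
  simp only [Complex.add_re, Complex.add_im, Complex.mul_re, Complex.mul_im,
    Complex.intCast_re, Complex.intCast_im, coe_re, coe_im, zero_mul, sub_zero, add_zero] at hN
  have hc : |γ 1 0| ≤ 1 := by
    have hcy : (γ 1 0 : ℝ) ^ 2 * (3 / 4) ^ 2 ≤ (γ 1 0 : ℝ) ^ 2 * z.im ^ 2 := by gcongr
    have hc2 : ((γ 1 0 : ℤ) : ℝ) ^ 2 < 2 ^ 2 := by nlinarith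
    have := abs_lt_of_sq_lt_sq (by exact_mod_cast hc2) (by norm_num : (0 : ℤ) ≤ 2)
    omega
  have hc' : |(γ 1 0 : ℝ)| ≤ 1 := by exact_mod_cast hc
  refine ⟨hc', ?_⟩
  have hcx : |(γ 1 0 : ℝ) * z.re| ≤ 1 / 2 := by
    rw [abs_mul]; nlinarith [abs_nonneg (γ 1 0 : ℝ), abs_nonneg z.re]
  have hcxd : |(γ 1 0 : ℝ) * z.re + γ 1 1| ≤ 3 / 2 :=
    abs_le_of_sq_le_sq (by nlinarith) (by norm_num)
  calc |(γ 1 1 : ℝ)| = |((γ 1 0 : ℝ) * z.re + γ 1 1) - (γ 1 0 : ℝ) * z.re| := by ring_nf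
    _ ≤ 3 / 2 + 1 / 2 := (abs_sub _ _).trans (add_le_add hcxd hcx)
    _ = 2 := by norm_num

lemma abs_upper_row_le (hx : |z.re| ≤ 1 / 2) (hy : √3 / 2 ≤ z.im)
    (hN : Complex.normSq (denom γ z) ≤ 2) (h : ‖((γ • z : ℍ) : ℂ) - z‖ ≤ z.im / 2) :
    |(γ 0 0 : ℝ)| ≤ 4 ∧ |(γ 0 1 : ℝ)| ≤ 7 * z.im := by
  have hy' := three_quarters_le_sqrt_three_div_two.trans hy
  set P : ℂ := (γ 0 0 : ℂ) * z + γ 0 1 with hP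
  have hD : ‖denom γ z‖ ≤ 3 / 2 := by
    rw [Complex.normSq_eq_norm_sq] at hN
    nlinarith [norm_nonneg (denom γ z)]
  have hw : ‖((γ • z : ℍ) : ℂ)‖ ≤ 5 / 2 * z.im := by
    have := Complex.norm_le_abs_re_add_abs_im (z : ℂ)
    rw [coe_re, coe_im, abs_of_pos z.im_pos] at this
    have := norm_le_norm_sub_add ((γ • z : ℍ) : ℂ) z
    linarith
  have hPnorm : ‖P‖ ≤ 4 * z.im := by
    rw [hP, num_eq_smul_mul_denom, norm_mul]
    nlinarith [norm_nonneg ((γ • z : ℍ) : ℂ)]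
  have hPim : P.im = γ 0 0 * z.im := by simp [hP]
  have hPre : P.re = γ 0 0 * z.re + γ 0 1 := by simp [hP]
  have ha : |(γ 0 0 : ℝ)| ≤ 4 := by
    refine le_of_mul_le_mul_right ?_ z.im_pos
    calc |(γ 0 0 : ℝ)| * z.im = |P.im| := by rw [hPim, abs_mul, abs_of_pos z.im_pos]
      _ ≤ 4 * z.im := (Complex.abs_im_le_norm P).trans hPnorm
  refine ⟨ha, ?_⟩
  calc |(γ 0 1 : ℝ)| = |P.re - γ 0 0 * z.re| := by rw [hPre, add_sub_cancel_left]
    _ ≤ |P.re| + |(γ 0 0 : ℝ)| * |z.re| := by rw [← abs_mul]; exact abs_sub _ _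
    _ ≤ 4 * z.im + 4 * (1 / 2) := by
      gcongr
      exact (Complex.abs_re_le_norm P).trans hPnorm
    _ ≤ 7 * z.im := by linarith

lemma abs_entry_le (hx : |z.re| ≤ 1 / 2) (hy : √3 / 2 ≤ z.im)
    (h : ‖((γ • z : ℍ) : ℂ) - z‖ ≤ z.im / 2) (i j : Fin 2) :
    |(γ i j : ℝ)| ≤ !![4, 7 * z.im; 1, 2] i j := by
  have hN := normSq_denom_le_two h
  obtain ⟨hc, hd⟩ := abs_lower_row_le hx hy hN
  obtain ⟨ha, hb⟩ := abs_upper_row_le hx hy hN h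
  fin_cases i <;> fin_cases j <;> assumption

end ModularGroup

lemma sqrt_rpow_div_self_le_half {ε k : ℝ} (hε : ε ≤ 1 / 2) (hk : 16 ≤ k) :
    √(k ^ ε / k) ≤ 1 / 2 := by
  have hk0 : 0 < k := by linarith
  have h4 : 4 ≤ √k := Real.le_sqrt_of_sq_le (by linarith)
  rw [Real.sqrt_le_left (by norm_num), div_le_iff₀ hk0]
  calc k ^ ε ≤ k ^ (1 / 2 : ℝ) := Real.rpow_le_rpow_of_exponent_le (by linarith) hε
    _ = √k := (Real.sqrt_eq_rpow k).symm
    _ ≤ (1 / 2) ^ 2 * k := by nlinarith [Real.sq_sqrt hk0.le]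

theorem statement19 (ε : ℝ) (hε : ε ∈ Set.Ioo (0 : ℝ) (1 / 2)) :
    ∃ C : ℝ, 0 < C ∧ ∃ k₀ : ℕ, ∀ k : ℕ, k₀ ≤ k →
      ∀ z : UpperHalfPlane, |z.re| ≤ 1 / 2 → Real.sqrt 3 / 2 ≤ z.im →
        z.im ≤ (k : ℝ) ^ ((1 : ℝ) / 2) →
        {γ : SL(2, ℤ) | ‖((γ • z : UpperHalfPlane) - (z : ℂ) : ℂ)‖
            ≤ Real.sqrt ((k : ℝ) ^ ε / k) * z.im}.Finite ∧
        ({γ : SL(2, ℤ) | ‖((γ • z : UpperHalfPlane) - (z : ℂ) : ℂ)‖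
            ≤ Real.sqrt ((k : ℝ) ^ ε / k) * z.im}.ncard : ℝ)
          ≤ C * (k : ℝ) ^ ((1 : ℝ) / 2) := by
  refine ⟨2025, by norm_num, 16, fun k hk z hx hy hzk => ?_⟩
  have hk16 : (16 : ℝ) ≤ k := by exact_mod_cast hk
  have hsub : {γ : SL(2, ℤ) | ‖((γ • z : UpperHalfPlane) - (z : ℂ) : ℂ)‖
      ≤ Real.sqrt ((k : ℝ) ^ ε / k) * z.im} ⊆
      {γ | ∀ i j, |(γ i j : ℝ)| ≤ !![4, 7 * z.im; 1, 2] i j} := fun γ hγ =>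
    ModularGroup.abs_entry_le hx hy <| hγ.trans <| by
      nlinarith [sqrt_rpow_div_self_le_half hε.2.le hk16, z.im_pos]
  have hfin := Matrix.SpecialLinearGroup.finite_setOf_abs_le !![4, 7 * z.im; 1, 2]
  have hY : 1 ≤ (k : ℝ) ^ ((1 : ℝ) / 2) := Real.one_le_rpow (by linarith) (by norm_num)
  refine ⟨hfin.subset hsub, ?_⟩
  calc _ ≤ ((∏ i, ∏ j, (2 * ⌊!![(4 : ℝ), 7 * z.im; 1, 2] i j⌋₊ + 1) : ℕ) : ℝ) := by
        exact_mod_cast (Set.ncard_le_ncard hsub hfin).trans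
          (Matrix.SpecialLinearGroup.ncard_setOf_abs_le_le _)
    _ = 135 * (2 * ⌊7 * z.im⌋₊ + 1) := by
        simp only [Fin.prod_univ_two, Matrix.of_apply, Matrix.cons_val', Matrix.cons_val_zero,
          Matrix.cons_val_one, Matrix.cons_val_fin_one, Nat.floor_ofNat, Nat.floor_one]
        push_cast
        ring
    _ ≤ 135 * (2 * (7 * z.im) + 1) := by gcongr; exact Nat.floor_le (by linarith [z.im_pos])
    _ ≤ 2025 * (k : ℝ) ^ ((1 : ℝ) / 2) := by linarith
end
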